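/- arXiv:2604.26701 — 9 statements merged into one kernel-verified Lean document; each statement's English description precedes it below -/
import Mathlib

section
/- For each j ∈ {0,1,2}, the triple of points obtained from (v0, v1, v2) by replacing vj with the barycenter vc is affinely independent, and for every i ≠ j the barycentric coordinate function of this new triple associated with the point vi coincides on all of ℝ² with the affine function λi − λj. -/
noncomputable section

open Matrix MeasureTheory

abbrev Vec2 : Type := Fin 2 → ℝ

/-- Euclidean dot product on `ℝ²`. -/
def dot2 (a b : Vec2) : ℝ := a 0 * b 0 + a 1 * b 1

/-- Partial derivative of `f` in the `i`-th coordinate direction. -/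
def pd (i : Fin 2) (f : Vec2 → ℝ) (x : Vec2) : ℝ := fderiv ℝ f x (Pi.single i 1)

/-- The matrix `a bᵀ`. -/
def outer (a b : Vec2) : Matrix (Fin 2) (Fin 2) ℝ := fun i j => a i * b j

/-- `sym(a ⊗ b) = (a bᵀ + b aᵀ)/2`. -/
def symOuter (a b : Vec2) : Matrix (Fin 2) (Fin 2) ℝ := (1 / 2 : ℝ) • (outer a b + outer b a)

/-- The Airy operator (rotated Hessian)
`J(f) = [[∂²f/∂x₂², −∂²f/∂x₁∂x₂], [−∂²f/∂x₁∂x₂, ∂²f/∂x₁²]]`. -/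
def airy (f : Vec2 → ℝ) (x : Vec2) : Matrix (Fin 2) (Fin 2) ℝ :=
  !![pd 1 (pd 1 f) x, -(pd 0 (pd 1 f) x); -(pd 0 (pd 1 f) x), pd 0 (pd 0 f) x]

/-- `f` is the evaluation function of a real polynomial in two variables of total degree ≤ m. -/
def IsPolyDeg (m : ℕ) (f : Vec2 → ℝ) : Prop :=
  ∃ P : MvPolynomial (Fin 2) ℝ, P.totalDegree ≤ m ∧ ∀ x, f x = MvPolynomial.eval x P

/-- `f` is the evaluation function of a real polynomial in two variables. -/
def IsPolyFun (f : Vec2 → ℝ) : Prop :=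
  ∃ P : MvPolynomial (Fin 2) ℝ, ∀ x, f x = MvPolynomial.eval x P

/-- `λᵢᴿ = λᵢ − min(λ₀, λ₁, λ₂)`: hat function of vertex `vᵢ` on the barycentric refinement. -/
def lamR (lam : Fin 3 → Vec2 → ℝ) (i : Fin 3) (x : Vec2) : ℝ :=
  lam i x - min (lam 0 x) (min (lam 1 x) (lam 2 x))

/-- `x ∈ Ωⱼ`: the region where `λⱼ` is the strict minimum of the barycentric coordinates. -/
def inReg (lam : Fin 3 → Vec2 → ℝ) (j : Fin 3) (x : Vec2) : Prop :=
  ∀ i : Fin 3, i ≠ j → lam j x < lam i x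

/-- The branch formula of `ψᵢ` on `Ω_{i+2}`. -/
def psiA (lam : Fin 3 → Vec2 → ℝ) (tc : Fin 3 → Vec2) (k : ℕ) (i : Fin 3) (x : Vec2) :
    Matrix (Fin 2) (Fin 2) ℝ :=
  (2 * (lam i x - lam (i + 2) x) ^ k) • symOuter (tc i) (tc (i + 1)) -
    ((k : ℝ) * (lam i x - lam (i + 2) x) ^ (k - 1) * (lam (i + 1) x - lam (i + 2) x)) •
      outer (tc (i + 1)) (tc (i + 1))

/-- The branch formula of `ψᵢ` on `Ω_{i+1}`. -/
def psiB (lam : Fin 3 → Vec2 → ℝ) (tc : Fin 3 → Vec2) (k : ℕ) (i : Fin 3) (x : Vec2) :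
    Matrix (Fin 2) (Fin 2) ℝ :=
  -((2 * (lam i x - lam (i + 1) x) ^ k) • symOuter (tc i) (tc (i + 2))) +
    ((k : ℝ) * (lam i x - lam (i + 1) x) ^ (k - 1) * (lam (i + 2) x - lam (i + 1) x)) •
      outer (tc (i + 2)) (tc (i + 2))

open Classical in
/-- The piecewise enrichment stress `ψᵢ`. -/
def psiFun (lam : Fin 3 → Vec2 → ℝ) (tc : Fin 3 → Vec2) (k : ℕ) (i : Fin 3) (x : Vec2) :
    Matrix (Fin 2) (Fin 2) ℝ :=
  if inReg lam (i + 2) x then psiA lam tc k i x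
  else if inReg lam (i + 1) x then psiB lam tc k i x
  else 0

/-- The `Ωⱼ`-branch polynomial formula of `ψᵢ` (value used on the closed edge `eⱼ`). -/
def psiEdge (lam : Fin 3 → Vec2 → ℝ) (tc : Fin 3 → Vec2) (k : ℕ) (i j : Fin 3) (x : Vec2) :
    Matrix (Fin 2) (Fin 2) ℝ :=
  if j = i + 2 then psiA lam tc k i x
  else if j = i + 1 then psiB lam tc k i x
  else 0

/-- The Airy potential `vᵢ = (4|T|²/(9(k+1))) (λᵢᴿ)^{k+1} (λ_{i+2} − λ_{i+1})`. -/
def vEnrich (lam : Fin 3 → Vec2 → ℝ) (area : ℝ) (k : ℕ) (i : Fin 3) (x : Vec2) : ℝ :=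
  4 * area ^ 2 / (9 * (k + 1)) * (lamR lam i x) ^ (k + 1) * (lam (i + 2) x - lam (i + 1) x)

/-- `v_{i,i+1} = (C_T/(k+1))[(λᵢᴿ)^{k+1} − λᵢ^{k+1}](λ_{i+2} − λ_{i+1}) − C_T λᵢ^k λ_{i+1} λ_{i+2}`. -/
def vE1 (lam : Fin 3 → Vec2 → ℝ) (area : ℝ) (k : ℕ) (i : Fin 3) (x : Vec2) : ℝ :=
  4 * area ^ 2 / 9 / (k + 1) * ((lamR lam i x) ^ (k + 1) - (lam i x) ^ (k + 1)) *
      (lam (i + 2) x - lam (i + 1) x) -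
    4 * area ^ 2 / 9 * (lam i x) ^ k * lam (i + 1) x * lam (i + 2) x

/-- `v_{i,i+2} = (C_T/(k+1))[(λᵢᴿ)^{k+1} − λᵢ^{k+1}](λ_{i+2} − λ_{i+1}) + C_T λᵢ^k λ_{i+1} λ_{i+2}`. -/
def vE2 (lam : Fin 3 → Vec2 → ℝ) (area : ℝ) (k : ℕ) (i : Fin 3) (x : Vec2) : ℝ :=
  4 * area ^ 2 / 9 / (k + 1) * ((lamR lam i x) ^ (k + 1) - (lam i x) ^ (k + 1)) *
      (lam (i + 2) x - lam (i + 1) x) +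
    4 * area ^ 2 / 9 * (lam i x) ^ k * lam (i + 1) x * lam (i + 2) x

/-- `wᵢ = (1/(4 C_T c_{i,i})) (v_{i+1,i} − v_{i+2,i})`, with `k = 1`. -/
def wFun (lam : Fin 3 → Vec2 → ℝ) (g : Fin 3 → Vec2) (n : Fin 3 → Vec2) (area : ℝ)
    (i : Fin 3) (x : Vec2) : ℝ :=
  1 / (4 * (4 * area ^ 2 / 9) * dot2 (g i) (n i)) *
    (vE2 lam area 1 (i + 1) x - vE1 lam area 1 (i + 2) x)

/-- `sᵢ = λ_{i+1} λ_{i+2} (λ_{i+1} − λ_{i+2})`. -/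
def sFun (lam : Fin 3 → Vec2 → ℝ) (i : Fin 3) (x : Vec2) : ℝ :=
  lam (i + 1) x * lam (i + 2) x * (lam (i + 1) x - lam (i + 2) x)

/-- `uᵢ = sᵢ − 3(c_{i+1,i} − c_{i+2,i}) wᵢ − c_{i+1,i+1} w_{i+1} + c_{i+2,i+2} w_{i+2}`. -/
def uFun (lam : Fin 3 → Vec2 → ℝ) (g : Fin 3 → Vec2) (n : Fin 3 → Vec2) (area : ℝ)
    (i : Fin 3) (x : Vec2) : ℝ :=
  sFun lam i x - 3 * (dot2 (g (i + 1)) (n i) - dot2 (g (i + 2)) (n i)) * wFun lam g n area i x -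
    dot2 (g (i + 1)) (n (i + 1)) * wFun lam g n area (i + 1) x +
    dot2 (g (i + 2)) (n (i + 2)) * wFun lam g n area (i + 2) x

/-- The closed triangle `T = conv{v₀, v₁, v₂}`. -/
def Tset (v : Fin 3 → Vec2) : Set Vec2 := convexHull ℝ {v 0, v 1, v 2}

/-- The closed edge `eⱼ` of `T` opposite the vertex `vⱼ`. -/
def edgeSeg (v : Fin 3 → Vec2) (j : Fin 3) : Set Vec2 := segment ℝ (v (j + 1)) (v (j + 2))

/-- `det(v₁ − v₀, v₂ − v₀)`. -/
def detT (v : Fin 3 → Vec2) : ℝ :=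
  (v 1 0 - v 0 0) * (v 2 1 - v 0 1) - (v 1 1 - v 0 1) * (v 2 0 - v 0 0)

/-- replacing any vertex `vⱼ` of the triangle by the barycenter gives an affinely
independent triple, and for `i ≠ j` the barycentric coordinate of the new triple associated
with `vᵢ` equals `λᵢ − λⱼ` on all of `ℝ²`. -/
theorem barycentric_refinement_coordinates
    (v : Fin 3 → Vec2) (hv : AffineIndependent ℝ v)
    (lam : Fin 3 → Vec2 → ℝ) (g : Fin 3 → Vec2) (cst : Fin 3 → ℝ)
    (hlam : ∀ i x, lam i x = dot2 (g i) x + cst i)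
    (hdelta : ∀ i j, lam i (v j) = if i = j then 1 else 0)
    (vc : Vec2) (hvc : vc = (1 / 3 : ℝ) • (v 0 + v 1 + v 2))
    (j : Fin 3) :
    AffineIndependent ℝ (Function.update v j vc) ∧
      ∀ i, i ≠ j → ∀ (μ : Vec2 → ℝ) (gm : Vec2) (cm : ℝ),
        (∀ x, μ x = dot2 gm x + cm) →
        (∀ l, μ (Function.update v j vc l) = if l = i then 1 else 0) →
        ∀ x, μ x = lam i x - lam j x := by
  classical
  -- scalar versions of the barycentric coordinate facts
  have hS : ∀ i l : Fin 3, g i 0 * v l 0 + g i 1 * v l 1 + cst i = if i = l then 1 else 0 := by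
    intro i l
    have h := hdelta i l
    rw [hlam] at h
    simpa [dot2] using h
  have hvcm : ∀ m : Fin 2, 3 * vc m = v 0 m + v 1 m + v 2 m := by
    intro m
    rw [hvc]
    show 3 * (1 / 3 * ((v 0 + v 1 + v 2) m)) = _
    simp only [Pi.add_apply]
    ring
  -- an affine function vanishing at the three vertices vanishes identically
  have hvan : ∀ d0 d1 e : ℝ,
      (∀ l : Fin 3, d0 * v l 0 + d1 * v l 1 + e = 0) →
      ∀ x : Vec2, d0 * x 0 + d1 * x 1 + e = 0 := by
    intro d0 d1 e h0 x
    have h10 := hS 1 0; have h11 := hS 1 1; have h12 := hS 1 2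
    have h20 := hS 2 0; have h21 := hS 2 1; have h22 := hS 2 2
    simp only [show ((1:Fin 3) = 0) = False by simp, show ((1:Fin 3) = 1) = True by simp,
      show ((1:Fin 3) = 2) = False by simp, show ((2:Fin 3) = 0) = False by simp,
      show ((2:Fin 3) = 1) = False by simp, show ((2:Fin 3) = 2) = True by simp,
      if_true, if_false] at h10 h11 h12 h20 h21 h22
    have e0 := h0 0; have e1 := h0 1; have e2 := h0 2
    have hu1 : g 1 0 * (v 1 0 - v 0 0) + g 1 1 * (v 1 1 - v 0 1) = 1 := by
      linear_combination h11 - h10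
    have hu2 : g 1 0 * (v 2 0 - v 0 0) + g 1 1 * (v 2 1 - v 0 1) = 0 := by
      linear_combination h12 - h10
    have hu3 : g 2 0 * (v 1 0 - v 0 0) + g 2 1 * (v 1 1 - v 0 1) = 0 := by
      linear_combination h21 - h20
    have hu4 : g 2 0 * (v 2 0 - v 0 0) + g 2 1 * (v 2 1 - v 0 1) = 1 := by
      linear_combination h22 - h20
    have hda : d0 * (v 1 0 - v 0 0) + d1 * (v 1 1 - v 0 1) = 0 := by
      linear_combination e1 - e0
    have hdb : d0 * (v 2 0 - v 0 0) + d1 * (v 2 1 - v 0 1) = 0 := by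
      linear_combination e2 - e0
    have hDG : ((v 1 0 - v 0 0) * (v 2 1 - v 0 1) - (v 1 1 - v 0 1) * (v 2 0 - v 0 0)) *
        (g 1 0 * g 2 1 - g 1 1 * g 2 0) = 1 := by
      linear_combination (g 2 0 * (v 2 0 - v 0 0) + g 2 1 * (v 2 1 - v 0 1)) * hu1 + hu4 -
        (g 2 0 * (v 1 0 - v 0 0) + g 2 1 * (v 1 1 - v 0 1)) * hu2
    have hd0 : d0 = 0 := by
      linear_combination ((g 1 0 * g 2 1 - g 1 1 * g 2 0) * (v 2 1 - v 0 1)) * hda -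
        ((g 1 0 * g 2 1 - g 1 1 * g 2 0) * (v 1 1 - v 0 1)) * hdb - d0 * hDG
    have hd1 : d1 = 0 := by
      linear_combination ((g 1 0 * g 2 1 - g 1 1 * g 2 0) * (v 1 0 - v 0 0)) * hdb -
        ((g 1 0 * g 2 1 - g 1 1 * g 2 0) * (v 2 0 - v 0 0)) * hda - d1 * hDG
    have he : e = 0 := by
      linear_combination e0 - v 0 0 * hd0 - v 0 1 * hd1
    linear_combination x 0 * hd0 + x 1 * hd1 + he
  -- the sum rule for affine functions through the barycenter
  have hμsum : ∀ (μ : Vec2 → ℝ) (gm : Vec2) (cm : ℝ), (∀ x, μ x = dot2 gm x + cm) →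
      μ (v 0) + μ (v 1) + μ (v 2) = 3 * μ vc := by
    intro μ gm cm hμ
    rw [hμ, hμ, hμ, hμ]
    simp only [dot2]
    linear_combination (-(gm 0)) * hvcm 0 + (-(gm 1)) * hvcm 1
  constructor
  · -- affine independence of the refined triple
    rw [affineIndependent_iff_of_fintype]
    intro w hw hws
    rw [Finset.weightedVSub_eq_linear_combination _ hw] at hws
    simp only [Fin.sum_univ_three] at hw hws
    have hj3 : j = 0 ∨ j = 1 ∨ j = 2 := by omega
    rcases hj3 with rfl | rfl | rfl
    · rw [Function.update_self, Function.update_of_ne (by decide),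
        Function.update_of_ne (by decide)] at hws
      have h1 : ∑ l, (![w 0 / 3, w 1 + w 0 / 3, w 2 + w 0 / 3] : Fin 3 → ℝ) l = 0 := by
        simp [Fin.sum_univ_three]; linarith
      have h2 : ∑ l, (![w 0 / 3, w 1 + w 0 / 3, w 2 + w 0 / 3] : Fin 3 → ℝ) l • v l = 0 := by
        funext m
        have hm := congrFun hws m
        simp only [Pi.add_apply, Pi.smul_apply, smul_eq_mul, Pi.zero_apply, Fin.sum_univ_three,
          Finset.sum_apply, Matrix.cons_val_zero, Matrix.cons_val_one, Matrix.head_cons,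
          Matrix.cons_val_two, Matrix.tail_cons] at hm ⊢
        linear_combination hm - w 0 / 3 * hvcm m
      have hz := hv.eq_zero_of_sum_eq_zero h1 h2
      intro l
      have z0 := hz 0 (Finset.mem_univ _)
      have z1 := hz 1 (Finset.mem_univ _)
      have z2 := hz 2 (Finset.mem_univ _)
      simp only [Matrix.cons_val_zero, Matrix.cons_val_one, Matrix.head_cons,
        Matrix.cons_val_two, Matrix.tail_cons] at z0 z1 z2
      have hl3 : l = 0 ∨ l = 1 ∨ l = 2 := by omega
      rcases hl3 with rfl | rfl | rfl <;> linarith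
    · rw [Function.update_self, Function.update_of_ne (by decide),
        Function.update_of_ne (by decide)] at hws
      have h1 : ∑ l, (![w 0 + w 1 / 3, w 1 / 3, w 2 + w 1 / 3] : Fin 3 → ℝ) l = 0 := by
        simp [Fin.sum_univ_three]; linarith
      have h2 : ∑ l, (![w 0 + w 1 / 3, w 1 / 3, w 2 + w 1 / 3] : Fin 3 → ℝ) l • v l = 0 := by
        funext m
        have hm := congrFun hws m
        simp only [Pi.add_apply, Pi.smul_apply, smul_eq_mul, Pi.zero_apply, Fin.sum_univ_three,
          Finset.sum_apply, Matrix.cons_val_zero, Matrix.cons_val_one, Matrix.head_cons,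
          Matrix.cons_val_two, Matrix.tail_cons] at hm ⊢
        linear_combination hm - w 1 / 3 * hvcm m
      have hz := hv.eq_zero_of_sum_eq_zero h1 h2
      intro l
      have z0 := hz 0 (Finset.mem_univ _)
      have z1 := hz 1 (Finset.mem_univ _)
      have z2 := hz 2 (Finset.mem_univ _)
      simp only [Matrix.cons_val_zero, Matrix.cons_val_one, Matrix.head_cons,
        Matrix.cons_val_two, Matrix.tail_cons] at z0 z1 z2
      have hl3 : l = 0 ∨ l = 1 ∨ l = 2 := by omega
      rcases hl3 with rfl | rfl | rfl <;> linarith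
    · rw [Function.update_self, Function.update_of_ne (by decide),
        Function.update_of_ne (by decide)] at hws
      have h1 : ∑ l, (![w 0 + w 2 / 3, w 1 + w 2 / 3, w 2 / 3] : Fin 3 → ℝ) l = 0 := by
        simp [Fin.sum_univ_three]; linarith
      have h2 : ∑ l, (![w 0 + w 2 / 3, w 1 + w 2 / 3, w 2 / 3] : Fin 3 → ℝ) l • v l = 0 := by
        funext m
        have hm := congrFun hws m
        simp only [Pi.add_apply, Pi.smul_apply, smul_eq_mul, Pi.zero_apply, Fin.sum_univ_three,
          Finset.sum_apply, Matrix.cons_val_zero, Matrix.cons_val_one, Matrix.head_cons,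
          Matrix.cons_val_two, Matrix.tail_cons] at hm ⊢
        linear_combination hm - w 2 / 3 * hvcm m
      have hz := hv.eq_zero_of_sum_eq_zero h1 h2
      intro l
      have z0 := hz 0 (Finset.mem_univ _)
      have z1 := hz 1 (Finset.mem_univ _)
      have z2 := hz 2 (Finset.mem_univ _)
      simp only [Matrix.cons_val_zero, Matrix.cons_val_one, Matrix.head_cons,
        Matrix.cons_val_two, Matrix.tail_cons] at z0 z1 z2
      have hl3 : l = 0 ∨ l = 1 ∨ l = 2 := by omega
      rcases hl3 with rfl | rfl | rfl <;> linarith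
  · -- identification of the refined barycentric coordinates
    intro i hi μ gm cm hμ hμδ x
    have hvcval : μ vc = 0 := by
      have h := hμδ j
      rw [Function.update_self] at h
      rw [h, if_neg (Ne.symm hi)]
    have hvl : ∀ l, l ≠ j → μ (v l) = if l = i then 1 else 0 := by
      intro l hl
      have h := hμδ l
      rwa [Function.update_of_ne hl] at h
    have hsum := hμsum μ gm cm hμ
    rw [hvcval] at hsum
    norm_num at hsum
    have hvj : μ (v j) = -1 := by
      have hj3 : j = 0 ∨ j = 1 ∨ j = 2 := by omega
      have hi3 : i = 0 ∨ i = 1 ∨ i = 2 := by omega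
      rcases hj3 with rfl | rfl | rfl <;> rcases hi3 with rfl | rfl | rfl <;>
        first
          | exact absurd rfl hi
          | (have ha := hvl 1 (by decide); have hb := hvl 2 (by decide);
             simp only [show ((1:Fin 3) = 1) = True by simp, show ((1:Fin 3) = 2) = False by simp,
               show ((2:Fin 3) = 1) = False by simp, show ((2:Fin 3) = 2) = True by simp,
               if_true, if_false] at ha hb; linarith)
          | (have ha := hvl 0 (by decide); have hb := hvl 2 (by decide);
             simp only [show ((0:Fin 3) = 0) = True by simp, show ((0:Fin 3) = 2) = False by simp,
               show ((2:Fin 3) = 0) = False by simp, show ((2:Fin 3) = 2) = True by simp,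
               if_true, if_false] at ha hb; linarith)
          | (have ha := hvl 0 (by decide); have hb := hvl 1 (by decide);
             simp only [show ((0:Fin 3) = 0) = True by simp, show ((0:Fin 3) = 1) = False by simp,
               show ((1:Fin 3) = 0) = False by simp, show ((1:Fin 3) = 1) = True by simp,
               if_true, if_false] at ha hb; linarith)
    have key : ∀ l, μ (v l) = lam i (v l) - lam j (v l) := by
      intro l
      rw [hdelta i l, hdelta j l]
      by_cases hlj : l = j
      · subst hlj
        rw [hvj, if_neg hi, if_pos rfl]
        norm_num
      · have hjl : ¬ j = l := fun h => hlj h.symm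
        rw [hvl l hlj, if_neg hjl]
        by_cases hli : l = i
        · have hil : i = l := hli.symm
          rw [if_pos hli, if_pos hil]
          ring
        · have hil : ¬ i = l := fun h => hli h.symm
          rw [if_neg hli, if_neg hil]
          ring
    have hpre : ∀ l : Fin 3, (gm 0 - g i 0 + g j 0) * v l 0 + (gm 1 - g i 1 + g j 1) * v l 1 +
        (cm - cst i + cst j) = 0 := by
      intro l
      have hk := key l
      rw [hμ, hlam, hlam] at hk
      simp only [dot2] at hk
      linear_combination hk
    have hx := hvan _ _ _ hpre x
    rw [hμ, hlam, hlam]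
    simp only [dot2]
    linear_combination hx
end
end

section
/- Assume the positive orientation det(v1 − v0, v2 − v0) = 2|T| > 0, and let R = [[0, 1], [−1, 0]]. Then R ∇(λ1 − λ2) = 3(v0 − vc)/(2|T|) and R ∇(λ2 − λ1) = 3(vc − v0)/(2|T|), where ∇ denotes the constant gradient vector of an affine function on ℝ². (Here λ1 − λ2 is the barycentric coordinate associated with v1 of the subtriangle conv{v0, v1, vc}, and λ2 − λ1 is the one associated with v2 of the subtriangle conv{v0, vc, v2}.) -/
noncomputable section

open Matrix MeasureTheory

/-- with positive orientation `det(v₁ − v₀, v₂ − v₀) = 2|T| > 0` and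
`R = [[0,1],[−1,0]]`, one has `R ∇(λ₁ − λ₂) = 3(v₀ − v_c)/(2|T|)` and
`R ∇(λ₂ − λ₁) = 3(v_c − v₀)/(2|T|)`. -/
theorem rotated_gradient_of_interior_coordinates
    (v : Fin 3 → Vec2) (hv : AffineIndependent ℝ v)
    (lam : Fin 3 → Vec2 → ℝ) (g : Fin 3 → Vec2) (cst : Fin 3 → ℝ)
    (hlam : ∀ i x, lam i x = dot2 (g i) x + cst i)
    (hdelta : ∀ i j, lam i (v j) = if i = j then 1 else 0)
    (vc : Vec2) (hvc : vc = (1 / 3 : ℝ) • (v 0 + v 1 + v 2))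
    (area : ℝ) (hpos : 0 < area) (hdet : detT v = 2 * area) :
    Matrix.mulVec (!![0, 1; -1, 0] : Matrix (Fin 2) (Fin 2) ℝ) (g 1 - g 2)
        = (3 / (2 * area)) • (v 0 - vc) ∧
      Matrix.mulVec (!![0, 1; -1, 0] : Matrix (Fin 2) (Fin 2) ℝ) (g 2 - g 1)
        = (3 / (2 * area)) • (vc - v 0) := by
  have H : ∀ i j, dot2 (g i) (v j) + cst i = if i = j then 1 else 0 :=
    fun i j => (hlam i (v j)).symm.trans (hdelta i j)
  have h10 := H 1 0; have h11 := H 1 1; have h12 := H 1 2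
  have h20 := H 2 0; have h21 := H 2 1; have h22 := H 2 2
  simp [dot2] at h10 h11 h12 h20 h21 h22
  unfold detT at hdet
  have hane : (2 : ℝ) * area ≠ 0 := by positivity
  have A0 : (g 1 0 - g 2 0) * (2 * area)
      = (v 2 1 - v 0 1) + (v 1 1 - v 0 1) := by
    linear_combination (v 2 1 - v 0 1) * (h11 - h10 - h21 + h20)
      - (v 1 1 - v 0 1) * (h12 - h10 - h22 + h20) - (g 1 0 - g 2 0) * hdet
  have A1 : (g 1 1 - g 2 1) * (2 * area)
      = -((v 1 0 - v 0 0) + (v 2 0 - v 0 0)) := by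
    linear_combination (-(v 2 0 - v 0 0)) * (h11 - h10 - h21 + h20)
      + (v 1 0 - v 0 0) * (h12 - h10 - h22 + h20) - (g 1 1 - g 2 1) * hdet
  constructor <;> funext i <;> fin_cases i <;>
      simp [Matrix.mulVec, dotProduct, Fin.sum_univ_two, hvc, Pi.smul_apply,
        Pi.sub_apply, Pi.add_apply] <;>
      rw [div_mul_eq_mul_div, eq_div_iff hane]
  · linear_combination A1
  · linear_combination -A0
  · linear_combination -A1
  · linear_combination A0
end
end

section
/- For every integer k ≥ 1, the function v0 : ℝ² → ℝ defined by v0 = (4|T|²/(9(k+1))) (λ0R)^{k+1} (λ2 − λ1) is continuously differentiable on all of ℝ² (in particular v0 ∈ C¹(T)). -/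
noncomputable section

open Matrix MeasureTheory

/-! Since `λ₀ᴿ = max(0, a, b)` with `a = λ₀ − λ₁`, `b = λ₀ − λ₂` and `λ₂ − λ₁ = a − b`, the potential
is a constant times `P(max(a, b)) (a − b)` with `P(t) = max(0, t)^{k+1}`, which is `C¹` for `k ≥ 1`.
The kink of `max(a, b)` along `a = b` is harmless because
`P(max(a, b)) (a − b) = P(b) (a − b) + (P(a) − P(b)) max(a − b, 0)` and `P(a) − P(b)` vanishes there:
a product `φ · max(c, 0)` of `C¹` functions is `C¹` as soon as `φ` vanishes on `{c = 0}`. -/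

open Asymptotics Filter Topology

section MulMaxZero

variable {E : Type*} [NormedAddCommGroup E] [NormedSpace ℝ E]

theorem hasFDerivAt_mul_of_eq_zero_of_tendsto_zero {φ ψ : E → ℝ} {x : E}
    (hφ : DifferentiableAt ℝ φ x) (hφx : φ x = 0) (hψ : Tendsto ψ (𝓝 x) (𝓝 0)) :
    HasFDerivAt (fun y => φ y * ψ y) (0 : E →L[ℝ] ℝ) x := by
  have hφO : φ =O[𝓝 x] fun y => ‖y - x‖ := by
    simpa [hφx] using hφ.hasFDerivAt.isBigO_sub.norm_right
  have hprod : (fun y => φ y * ψ y) =o[𝓝 x] fun y => ‖y - x‖ := by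
    simpa using hφO.mul_isLittleO (isLittleO_one_iff ℝ |>.mpr hψ)
  rw [HasFDerivAt, hasFDerivAtFilter_iff_isLittleO]
  simpa [Function.comp_def, hφx] using isLittleO_norm_right.mp hprod

theorem hasFDerivAt_mul_max_zero {φ c : E → ℝ} {x : E} (hφ : DifferentiableAt ℝ φ x)
    (hc : DifferentiableAt ℝ c x) (hφc : c x = 0 → φ x = 0) :
    HasFDerivAt (fun y => φ y * max (c y) 0)
      (max (c x) 0 • fderiv ℝ φ x + if c x ≤ 0 then 0 else φ x • fderiv ℝ c x) x := by
  rcases lt_trichotomy (c x) 0 with hneg | hzero | hpos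
  · have hev : (fun y => φ y * max (c y) 0) =ᶠ[𝓝 x] fun _ => 0 := by
      filter_upwards [hc.continuousAt.eventually_lt continuousAt_const hneg] with y hy
      simp [max_eq_right hy.le]
    simpa [max_eq_right hneg.le, hneg.le] using (hasFDerivAt_const 0 x).congr_of_eventuallyEq hev
  · have hψ : Tendsto (fun y => max (c y) 0) (𝓝 x) (𝓝 0) := by
      simpa [hzero] using hc.continuousAt.max (continuousAt_const (y := (0 : ℝ)))
    simpa [hzero] using hasFDerivAt_mul_of_eq_zero_of_tendsto_zero hφ (hφc hzero) hψ
  · have hev : (fun y => φ y * max (c y) 0) =ᶠ[𝓝 x] fun y => φ y * c y := by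
      filter_upwards [continuousAt_const.eventually_lt hc.continuousAt hpos] with y hy
      rw [max_eq_left hy.le]
    simpa [max_eq_left hpos.le, hpos.not_ge, add_comm] using
      (hφ.hasFDerivAt.mul hc.hasFDerivAt).congr_of_eventuallyEq hev

theorem ContDiff.mul_max_zero {φ c : E → ℝ} (hφ : ContDiff ℝ 1 φ) (hc : ContDiff ℝ 1 c)
    (hφc : ∀ x, c x = 0 → φ x = 0) : ContDiff ℝ 1 fun x => φ x * max (c x) 0 := by
  have hφd := hφ.differentiable one_ne_zero
  have hcd := hc.differentiable one_ne_zero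
  have hderiv x := hasFDerivAt_mul_max_zero (hφd x) (hcd x) (hφc x)
  rw [contDiff_one_iff_fderiv]
  refine ⟨fun x => (hderiv x).differentiableAt, ?_⟩
  rw [funext fun x => (hderiv x).fderiv]
  refine ((hc.continuous.max continuous_const).smul (hφ.continuous_fderiv one_ne_zero)).add ?_
  exact Continuous.if_le continuous_const (hφ.continuous.smul (hc.continuous_fderiv one_ne_zero))
    hc.continuous continuous_const fun x hx => by simp [hφc x hx]

end MulMaxZero

theorem contDiff_max_zero_pow_succ {k : ℕ} (hk : k ≠ 0) :
    ContDiff ℝ 1 fun t : ℝ => max 0 t ^ (k + 1) := by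
  have h : (fun t : ℝ => max 0 t ^ (k + 1)) = fun t => t ^ k * max t 0 := by
    funext t
    rcases le_total t 0 with ht | ht
    · simp [max_eq_left ht, max_eq_right ht, zero_pow (Nat.succ_ne_zero k)]
    · rw [max_eq_right ht, max_eq_left ht, pow_succ]
  rw [h]
  exact (contDiff_id.pow k).mul_max_zero contDiff_id fun t ht => by simp [ht, zero_pow hk]

theorem comp_max_mul_sub (P : ℝ → ℝ) (a b : ℝ) :
    P (max a b) * (a - b) = P b * (a - b) + (P a - P b) * max (a - b) 0 := by
  rcases le_total a b with hab | hab
  · simp [max_eq_right hab, max_eq_right (sub_nonpos.mpr hab)]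
  · rw [max_eq_left hab, max_eq_left (sub_nonneg.mpr hab)]
    ring

theorem lamR_zero_eq (lam : Fin 3 → Vec2 → ℝ) (x : Vec2) :
    lamR lam 0 x = max 0 (max (lam 0 x - lam 1 x) (lam 0 x - lam 2 x)) := by
  rw [lamR, ← max_sub_sub_left, ← max_sub_sub_left, sub_self]

theorem vEnrich_contDiff_one_general
    (lam : Fin 3 → Vec2 → ℝ) (g : Fin 3 → Vec2) (cst : Fin 3 → ℝ)
    (hlam : ∀ i x, lam i x = dot2 (g i) x + cst i)
    (area : ℝ)
    (k : ℕ) (hk : 1 ≤ k) :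
    ContDiff ℝ 1 (vEnrich lam area k 0) := by
  have hlamC i : ContDiff ℝ 1 (lam i) := by
    rw [funext (hlam i)]
    unfold dot2
    fun_prop
  set P : ℝ → ℝ := fun t => max 0 t ^ (k + 1)
  have hP : ContDiff ℝ 1 P := contDiff_max_zero_pow_succ (by omega)
  set a : Vec2 → ℝ := fun x => lam 0 x - lam 1 x
  set b : Vec2 → ℝ := fun x => lam 0 x - lam 2 x
  have ha : ContDiff ℝ 1 a := (hlamC 0).sub (hlamC 1)
  have hb : ContDiff ℝ 1 b := (hlamC 0).sub (hlamC 2)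
  have hv : vEnrich lam area k 0 = fun x => 4 * area ^ 2 / (9 * (k + 1)) *
      (P (b x) * (a x - b x) + (P (a x) - P (b x)) * max (a x - b x) 0) := by
    funext x
    rw [← comp_max_mul_sub, vEnrich, lamR_zero_eq, mul_assoc]
    congr 2
    simp only [a, b, zero_add]
    ring
  rw [hv]
  refine contDiff_const.mul (((hP.comp hb).mul (ha.sub hb)).add ?_)
  exact ((hP.comp ha).sub (hP.comp hb)).mul_max_zero (ha.sub hb) fun x hx => by
    simp [sub_eq_zero.mp hx]

/-- for every integer `k ≥ 1`, the enrichment potential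
`v₀ = (4|T|²/(9(k+1))) (λ₀ᴿ)^{k+1} (λ₂ − λ₁)` is continuously differentiable on `ℝ²`. -/
theorem vEnrich_contDiff_one
    (v : Fin 3 → Vec2) (hv : AffineIndependent ℝ v)
    (lam : Fin 3 → Vec2 → ℝ) (g : Fin 3 → Vec2) (cst : Fin 3 → ℝ)
    (hlam : ∀ i x, lam i x = dot2 (g i) x + cst i)
    (hdelta : ∀ i j, lam i (v j) = if i = j then 1 else 0)
    (vc : Vec2) (hvc : vc = (1 / 3 : ℝ) • (v 0 + v 1 + v 2))
    (area : ℝ) (harea : area = |detT v| / 2)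
    (k : ℕ) (hk : 1 ≤ k) :
    ContDiff ℝ 1 (vEnrich lam area k 0) :=
  vEnrich_contDiff_one_general lam g cst hlam area k hk
end
end

section
/- For every integer k ≥ 1 the following two identities of smooth matrix-valued functions hold at every point of ℝ²: J((4|T|²/(9(k+1)))(λ0 − λ2)^{k+1}(λ2 − λ1)) = 2(λ0 − λ2)^k sym(t_{c,0}⊗t_{c,1}) − k(λ0 − λ2)^{k−1}(λ1 − λ2) t_{c,1}⊗t_{c,1}, and J((4|T|²/(9(k+1)))(λ0 − λ1)^{k+1}(λ2 − λ1)) = −2(λ0 − λ1)^k sym(t_{c,0}⊗t_{c,2}) + k(λ0 − λ1)^{k−1}(λ2 − λ1) t_{c,2}⊗t_{c,2}. Consequently, the function v0 = (4|T|²/(9(k+1)))(λ0R)^{k+1}(λ2 − λ1) satisfies J(v0)(x) = ψ0(x) for every x ∈ Ω0 ∪ Ω1 ∪ Ω2, and in particular div ψ0 = 0 on each of the three open regions Ω0, Ω1, Ω2. -/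
noncomputable section

open Matrix MeasureTheory

/-! If `R` is the rotation by a right angle, then `J(v) = R (∇²v) Rᵀ`, so the Airy matrix of
`C p^(k+1) q`, with `p`, `q` affine, is an explicit combination of `Rp ⊗ Rp` and `sym(Rp ⊗ Rq)`.
Cramer's rule turns the vectors `t_{c,i}` into rotated gradients,
`t_{c,i} = (det/3) R(∇λ_{i+2} − ∇λ_{i+1})`, and `4|T|² = det²`; this gives the two branch
identities. On each open region `Ωⱼ` the potential `v₀` agrees with a polynomial branch (or with
`0` on `Ω₀`), so `J(v₀) = ψ₀` there, and `ψ₀` is divergence free because `div ∘ J = 0` on `C³`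
functions by the symmetry of third derivatives. -/

def rot90 (a : Vec2) : Vec2 := ![-a 1, a 0]

theorem dot2_sub_left (a b x : Vec2) : dot2 (a - b) x = dot2 a x - dot2 b x := by
  simp only [dot2, Pi.sub_apply]; ring

theorem dot2_sub_right (a x y : Vec2) : dot2 a (x - y) = dot2 a x - dot2 a y := by
  simp only [dot2, Pi.sub_apply]; ring

@[fun_prop]
theorem differentiable_dot2 (a : Vec2) : Differentiable ℝ (fun y => dot2 a y) := by
  unfold dot2; fun_prop

@[fun_prop]
theorem contDiff_dot2 (a : Vec2) {n : WithTop ℕ∞} : ContDiff ℝ n (fun y => dot2 a y) := by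
  unfold dot2; fun_prop

section PartialDerivatives

variable {f g : Vec2 → ℝ} {x : Vec2}

theorem pd_congr_of_eqOn {s : Set Vec2} (hs : IsOpen s) (hx : x ∈ s) (h : Set.EqOn f g s)
    (i : Fin 2) : pd i f x = pd i g x := by
  rw [pd, pd, (Filter.eventuallyEq_of_mem (hs.mem_nhds hx) h).fderiv_eq]

theorem airy_congr_of_eqOn {s : Set Vec2} (hs : IsOpen s) (hx : x ∈ s) (h : Set.EqOn f g s) :
    airy f x = airy g x := by
  have hpd : ∀ i, Set.EqOn (pd i f) (pd i g) s := fun i y hy => pd_congr_of_eqOn hs hy h i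
  simp only [airy, pd_congr_of_eqOn hs hx (hpd 1), pd_congr_of_eqOn hs hx (hpd 0)]

theorem pd_const (c : ℝ) (i : Fin 2) : pd i (fun _ => c) x = 0 := by
  simp [pd]

theorem pd_neg (i : Fin 2) : pd i (fun y => -f y) x = -pd i f x := by
  simp [pd]

theorem pd_add (hf : DifferentiableAt ℝ f x) (hg : DifferentiableAt ℝ g x) (i : Fin 2) :
    pd i (fun y => f y + g y) x = pd i f x + pd i g x := by
  simp [pd, fderiv_fun_add hf hg]

theorem pd_mul (hf : DifferentiableAt ℝ f x) (hg : DifferentiableAt ℝ g x) (i : Fin 2) :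
    pd i (fun y => f y * g y) x = pd i f x * g x + f x * pd i g x := by
  simp [pd, fderiv_fun_mul hf hg]; ring

theorem pd_pow (hf : DifferentiableAt ℝ f x) (n : ℕ) (i : Fin 2) :
    pd i (fun y => f y ^ n) x = n * f x ^ (n - 1) * pd i f x := by
  simp [pd, fderiv_fun_pow n hf]

theorem pd_dot2 (a : Vec2) (i : Fin 2) : pd i (dot2 a) x = a i := by
  have hlin : dot2 a =
      (a 0 • ContinuousLinearMap.proj 0 + a 1 • ContinuousLinearMap.proj 1 : Vec2 →L[ℝ] ℝ) := by
    funext y; simp [dot2]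
  rw [pd, hlin, ContinuousLinearMap.fderiv]
  fin_cases i <;> simp

theorem airy_const (c : ℝ) (x : Vec2) : airy (fun _ => c) x = 0 := by
  have hpd : ∀ j, pd j (fun _ => c) = fun _ => 0 := fun j => funext fun _ => pd_const c j
  ext i j; fin_cases i <;> fin_cases j <;> simp [airy, hpd, pd_const]

theorem contDiff_pd {n : ℕ} (hf : ContDiff ℝ (n + 1) f) (i : Fin 2) : ContDiff ℝ n (pd i f) :=
  (hf.fderiv_right le_rfl).clm_apply contDiff_const

theorem pd_pd_comm (hf : ContDiff ℝ 2 f) (i j : Fin 2) (x : Vec2) :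
    pd i (pd j f) x = pd j (pd i f) x := by
  have hdf : DifferentiableAt ℝ (fderiv ℝ f) x :=
    (hf.fderiv_right (m := 1) le_rfl).differentiable one_ne_zero x
  have hpd : ∀ i j, pd i (pd j f) x = fderiv ℝ (fderiv ℝ f) x (Pi.single i 1) (Pi.single j 1) :=
    fun i j => by
      change fderiv ℝ (fun y => fderiv ℝ f y (Pi.single j 1)) x (Pi.single i 1) = _
      simp [fderiv_clm_apply hdf (differentiableAt_const _)]
  rw [hpd, hpd, (hf.contDiffAt.isSymmSndFDerivAt (by simp)).eq]

theorem div_airy_eq_zero (hf : ContDiff ℝ 3 f) (i : Fin 2) (x : Vec2) :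
    pd 0 (fun y => airy f y i 0) x + pd 1 (fun y => airy f y i 1) x = 0 := by
  have h2 : ∀ j, ContDiff ℝ 2 (pd j f) := contDiff_pd hf
  fin_cases i
  · simp [airy, pd_neg, pd_pd_comm (h2 1) 0 1]
  · have hcomm : pd 0 (pd 1 f) = pd 1 (pd 0 f) := funext (pd_pd_comm (hf.of_le (by norm_num)) 0 1)
    simp [airy, pd_neg, hcomm, pd_pd_comm (h2 0) 0 1]

theorem div_eq_zero_of_eqOn_airy {ψ : Vec2 → Matrix (Fin 2) (Fin 2) ℝ} {s : Set Vec2}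
    (hs : IsOpen s) (hx : x ∈ s) (hf : ContDiff ℝ 3 f) (h : Set.EqOn ψ (airy f) s) (i : Fin 2) :
    pd 0 (fun y => ψ y i 0) x + pd 1 (fun y => ψ y i 1) x = 0 := by
  rw [pd_congr_of_eqOn hs hx (fun y hy => by rw [h hy]) 0,
    pd_congr_of_eqOn hs hx (fun y hy => by rw [h hy]) 1]
  exact div_airy_eq_zero hf i x

theorem pd_pow_mul_affine (a b : Vec2) (ca cb C : ℝ) (n : ℕ) (i : Fin 2) (x : Vec2) :
    pd i (fun y => C * (dot2 a y + ca) ^ (n + 1) * (dot2 b y + cb)) x =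
      C * ((n + 1) * (dot2 a x + ca) ^ n * (dot2 b x + cb) * a i +
        (dot2 a x + ca) ^ (n + 1) * b i) := by
  simp (disch := fun_prop) only [pd_add, pd_mul, pd_pow, pd_const, pd_dot2]
  push_cast; ring

theorem airy_pow_mul_affine (a b : Vec2) (ca cb C : ℝ) (n : ℕ) (x : Vec2) :
    airy (fun y => C * (dot2 a y + ca) ^ (n + 1) * (dot2 b y + cb)) x =
      (C * (n + 1)) • ((n * (dot2 a x + ca) ^ (n - 1) * (dot2 b x + cb)) •
          outer (rot90 a) (rot90 a) +
        (2 * (dot2 a x + ca) ^ n) • symOuter (rot90 a) (rot90 b)) := by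
  have hpd : ∀ i, pd i (fun y => C * (dot2 a y + ca) ^ (n + 1) * (dot2 b y + cb)) =
      fun y => C * ((n + 1) * (dot2 a y + ca) ^ n * (dot2 b y + cb) * a i +
        (dot2 a y + ca) ^ (n + 1) * b i) :=
    fun i => funext (pd_pow_mul_affine a b ca cb C n i)
  simp only [airy, hpd]
  simp (disch := fun_prop) only [pd_add, pd_mul, pd_pow, pd_const, pd_dot2]
  ext i j
  fin_cases i <;> fin_cases j <;> simp [outer, symOuter, rot90] <;> ring

end PartialDerivatives

/-- Cramer's rule in the plane. -/
theorem detT_smul_rot90 (v : Fin 3 → Vec2) (a : Vec2) :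
    detT v • rot90 a = dot2 a (v 1 - v 0) • (v 2 - v 0) - dot2 a (v 2 - v 0) • (v 1 - v 0) := by
  ext c; fin_cases c <;> simp [detT, rot90, dot2] <;> ring

section Barycentric

variable {v : Fin 3 → Vec2} {lam : Fin 3 → Vec2 → ℝ} {g : Fin 3 → Vec2} {cst : Fin 3 → ℝ}

theorem sub_barycenter_eq_smul_rot90 (hlam : ∀ i x, lam i x = dot2 (g i) x + cst i)
    (hdelta : ∀ i j, lam i (v j) = if i = j then 1 else 0) (i : Fin 3) :
    v i - (1 / 3 : ℝ) • (v 0 + v 1 + v 2) = (detT v / 3) • rot90 (g (i + 2) - g (i + 1)) := by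
  have hdot : ∀ i j l, dot2 (g i) (v j - v l) = lam i (v j) - lam i (v l) := fun i j l => by
    rw [dot2_sub_right, hlam, hlam]; ring
  rw [show detT v / 3 = 3⁻¹ * detT v by ring, mul_smul, detT_smul_rot90]
  fin_cases i <;> simp [dot2_sub_left, hdot, hdelta] <;> module

end Barycentric

def vEnrichA (lam : Fin 3 → Vec2 → ℝ) (area : ℝ) (k : ℕ) (i : Fin 3) (y : Vec2) : ℝ :=
  4 * area ^ 2 / (9 * (k + 1)) * (lam i y - lam (i + 2) y) ^ (k + 1) *
    (lam (i + 2) y - lam (i + 1) y)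

def vEnrichB (lam : Fin 3 → Vec2 → ℝ) (area : ℝ) (k : ℕ) (i : Fin 3) (y : Vec2) : ℝ :=
  4 * area ^ 2 / (9 * (k + 1)) * (lam i y - lam (i + 1) y) ^ (k + 1) *
    (lam (i + 2) y - lam (i + 1) y)

section AiryBranches

variable {lam : Fin 3 → Vec2 → ℝ} {g tc : Fin 3 → Vec2} {cst : Fin 3 → ℝ} {area d : ℝ}

theorem lam_sub_eq (hlam : ∀ i x, lam i x = dot2 (g i) x + cst i) (i j : Fin 3) (y : Vec2) :
    lam i y - lam j y = dot2 (g i - g j) y + (cst i - cst j) := by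
  rw [hlam, hlam, dot2_sub_left]; ring

theorem enrichment_const_mul_succ (harea : 4 * area ^ 2 = d ^ 2) (k : ℕ) :
    4 * area ^ 2 / (9 * (k + 1)) * (k + 1) = (d / 3) ^ 2 := by
  rw [harea]; field_simp; ring

theorem airy_vEnrichA (hlam : ∀ i x, lam i x = dot2 (g i) x + cst i)
    (htc : ∀ i, tc i = (d / 3) • rot90 (g (i + 2) - g (i + 1))) (harea : 4 * area ^ 2 = d ^ 2)
    (k : ℕ) (i : Fin 3) (x : Vec2) : airy (vEnrichA lam area k i) x = psiA lam tc k i x := by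
  have hi : i + 1 + 2 = i := by fin_cases i <;> rfl
  have hi' : i + 1 + 1 = i + 2 := by fin_cases i <;> rfl
  unfold vEnrichA psiA
  simp only [lam_sub_eq hlam]
  rw [airy_pow_mul_affine, enrichment_const_mul_succ harea, htc i, htc (i + 1), hi, hi']
  ext a b
  fin_cases a <;> fin_cases b <;> simp [outer, symOuter, rot90, dot2] <;> ring

theorem airy_vEnrichB (hlam : ∀ i x, lam i x = dot2 (g i) x + cst i)
    (htc : ∀ i, tc i = (d / 3) • rot90 (g (i + 2) - g (i + 1))) (harea : 4 * area ^ 2 = d ^ 2)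
    (k : ℕ) (i : Fin 3) (x : Vec2) : airy (vEnrichB lam area k i) x = psiB lam tc k i x := by
  have hi : i + 2 + 2 = i + 1 := by fin_cases i <;> rfl
  have hi' : i + 2 + 1 = i := by fin_cases i <;> rfl
  unfold vEnrichB psiB
  simp only [lam_sub_eq hlam]
  rw [airy_pow_mul_affine, enrichment_const_mul_succ harea, htc i, htc (i + 2), hi, hi']
  ext a b
  fin_cases a <;> fin_cases b <;> simp [outer, symOuter, rot90, dot2] <;> ring

end AiryBranches

section Regions

variable {lam : Fin 3 → Vec2 → ℝ} {x : Vec2}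

theorem inReg_unique {j j' : Fin 3} (h : inReg lam j x) (h' : inReg lam j' x) : j = j' := by
  by_contra hne
  exact lt_asymm (h j' (Ne.symm hne)) (h' j hne)

theorem isOpen_inReg (hcont : ∀ i, Continuous (lam i)) (j : Fin 3) :
    IsOpen {x | inReg lam j x} := by
  simp only [inReg, Set.ofPred_forall]
  exact isOpen_iInter_of_finite fun i => isOpen_iInter_of_finite fun _ =>
    isOpen_lt (hcont j) (hcont i)

theorem lamR_of_inReg {j : Fin 3} (h : inReg lam j x) (i : Fin 3) :
    lamR lam i x = lam i x - lam j x := by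
  have hle : ∀ i, lam j x ≤ lam i x := fun i => by
    rcases eq_or_ne i j with rfl | hij
    · rfl
    · exact (h i hij).le
  have hmin : min (lam 0 x) (min (lam 1 x) (lam 2 x)) = lam j x :=
    le_antisymm (by fin_cases j <;> simp) (le_min (hle 0) (le_min (hle 1) (hle 2)))
  rw [lamR, hmin]

variable {tc : Fin 3 → Vec2} {area : ℝ} {k : ℕ} {i : Fin 3}

theorem psiFun_of_inReg_add_two (h : inReg lam (i + 2) x) :
    psiFun lam tc k i x = psiA lam tc k i x := by
  rw [psiFun, if_pos h]

theorem psiFun_of_inReg_add_one (h : inReg lam (i + 1) x) :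
    psiFun lam tc k i x = psiB lam tc k i x := by
  have hne : i + 2 ≠ i + 1 := by fin_cases i <;> decide
  rw [psiFun, if_neg fun h' => hne (inReg_unique h' h), if_pos h]

theorem psiFun_of_inReg_self (h : inReg lam i x) : psiFun lam tc k i x = 0 := by
  have hne : i + 2 ≠ i ∧ i + 1 ≠ i := by fin_cases i <;> decide
  rw [psiFun, if_neg fun h' => hne.1 (inReg_unique h' h),
    if_neg fun h' => hne.2 (inReg_unique h' h)]

theorem vEnrich_of_inReg_add_two (h : inReg lam (i + 2) x) :
    vEnrich lam area k i x = vEnrichA lam area k i x := by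
  rw [vEnrich, vEnrichA, lamR_of_inReg h]

theorem vEnrich_of_inReg_add_one (h : inReg lam (i + 1) x) :
    vEnrich lam area k i x = vEnrichB lam area k i x := by
  rw [vEnrich, vEnrichB, lamR_of_inReg h]

theorem vEnrich_of_inReg_self (h : inReg lam i x) : vEnrich lam area k i x = 0 := by
  simp [vEnrich, lamR_of_inReg h]

end Regions

theorem exists_local_airy_potential {lam : Fin 3 → Vec2 → ℝ} {tc : Fin 3 → Vec2} {area : ℝ}
    {k : ℕ} {i : Fin 3} {x : Vec2} (hlam : ∀ j, ContDiff ℝ 3 (lam j))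
    (hA : ∀ y, airy (vEnrichA lam area k i) y = psiA lam tc k i y)
    (hB : ∀ y, airy (vEnrichB lam area k i) y = psiB lam tc k i y)
    (hx : inReg lam i x ∨ inReg lam (i + 1) x ∨ inReg lam (i + 2) x) :
    ∃ s F, IsOpen s ∧ x ∈ s ∧ ContDiff ℝ 3 F ∧ Set.EqOn (vEnrich lam area k i) F s ∧
      Set.EqOn (psiFun lam tc k i) (airy F) s := by
  have hopen := isOpen_inReg fun j => (hlam j).continuous
  have hl0 := hlam i
  have hl1 := hlam (i + 1)
  have hl2 := hlam (i + 2)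
  rcases hx with hx | hx | hx
  · refine ⟨_, fun _ => 0, hopen i, hx, contDiff_const, fun y hy => vEnrich_of_inReg_self hy,
      fun y hy => ?_⟩
    rw [psiFun_of_inReg_self hy, airy_const]
  · refine ⟨_, vEnrichB lam area k i, hopen (i + 1), hx, by unfold vEnrichB; fun_prop,
      fun y hy => vEnrich_of_inReg_add_one hy, fun y hy => ?_⟩
    rw [psiFun_of_inReg_add_one hy, hB]
  · refine ⟨_, vEnrichA lam area k i, hopen (i + 2), hx, by unfold vEnrichA; fun_prop,
      fun y hy => vEnrich_of_inReg_add_two hy, fun y hy => ?_⟩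
    rw [psiFun_of_inReg_add_two hy, hA]

theorem airy_potential_of_enrichment_stress_general
    (v : Fin 3 → Vec2)
    (lam : Fin 3 → Vec2 → ℝ) (g : Fin 3 → Vec2) (cst : Fin 3 → ℝ)
    (hlam : ∀ i x, lam i x = dot2 (g i) x + cst i)
    (hdelta : ∀ i j, lam i (v j) = if i = j then 1 else 0)
    (vc : Vec2) (hvc : vc = (1 / 3 : ℝ) • (v 0 + v 1 + v 2))
    (tc : Fin 3 → Vec2) (htc : ∀ i, tc i = v i - vc)
    (area : ℝ) (harea : area = |detT v| / 2)
    (k : ℕ) :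
    (∀ x, airy
        (fun y => 4 * area ^ 2 / (9 * (k + 1)) * (lam 0 y - lam 2 y) ^ (k + 1) *
          (lam 2 y - lam 1 y)) x = psiA lam tc k 0 x) ∧
    (∀ x, airy
        (fun y => 4 * area ^ 2 / (9 * (k + 1)) * (lam 0 y - lam 1 y) ^ (k + 1) *
          (lam 2 y - lam 1 y)) x = psiB lam tc k 0 x) ∧
    (∀ x, inReg lam 0 x ∨ inReg lam 1 x ∨ inReg lam 2 x →
        airy (vEnrich lam area k 0) x = psiFun lam tc k 0 x) ∧
    (∀ x, inReg lam 0 x ∨ inReg lam 1 x ∨ inReg lam 2 x → ∀ i : Fin 2,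
        pd 0 (fun y => psiFun lam tc k 0 y i 0) x +
          pd 1 (fun y => psiFun lam tc k 0 y i 1) x = 0) := by
  have hlamC : ∀ i, ContDiff ℝ 3 (lam i) := fun i => by
    rw [show lam i = _ from funext (hlam i)]; fun_prop
  have htc' : ∀ i, tc i = (detT v / 3) • rot90 (g (i + 2) - g (i + 1)) := fun i => by
    rw [htc, hvc, sub_barycenter_eq_smul_rot90 hlam hdelta]
  have harea' : 4 * area ^ 2 = detT v ^ 2 := by
    rw [harea, div_pow, sq_abs]; ring
  have hA := airy_vEnrichA hlam htc' harea' k 0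
  have hB := airy_vEnrichB hlam htc' harea' k 0
  refine ⟨hA, hB, fun x hx => ?_, fun x hx i => ?_⟩
  all_goals obtain ⟨s, F, hs, hxs, hF, hv, hψ⟩ := exists_local_airy_potential hlamC hA hB hx
  · rw [airy_congr_of_eqOn hs hxs hv, hψ hxs]
  · exact div_eq_zero_of_eqOn_airy hs hxs hF hψ i

/-- the two Airy identities for the polynomial branches of the potential `v₀`,
the identity `J(v₀) = ψ₀` on `Ω₀ ∪ Ω₁ ∪ Ω₂`, and the consequence `div ψ₀ = 0` on each of
the three open regions. -/
theorem airy_potential_of_enrichment_stress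
    (v : Fin 3 → Vec2) (hv : AffineIndependent ℝ v)
    (lam : Fin 3 → Vec2 → ℝ) (g : Fin 3 → Vec2) (cst : Fin 3 → ℝ)
    (hlam : ∀ i x, lam i x = dot2 (g i) x + cst i)
    (hdelta : ∀ i j, lam i (v j) = if i = j then 1 else 0)
    (vc : Vec2) (hvc : vc = (1 / 3 : ℝ) • (v 0 + v 1 + v 2))
    (tc : Fin 3 → Vec2) (htc : ∀ i, tc i = v i - vc)
    (area : ℝ) (harea : area = |detT v| / 2)
    (k : ℕ) (hk : 1 ≤ k) :
    (∀ x, airy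
        (fun y => 4 * area ^ 2 / (9 * (k + 1)) * (lam 0 y - lam 2 y) ^ (k + 1) *
          (lam 2 y - lam 1 y)) x = psiA lam tc k 0 x) ∧
    (∀ x, airy
        (fun y => 4 * area ^ 2 / (9 * (k + 1)) * (lam 0 y - lam 1 y) ^ (k + 1) *
          (lam 2 y - lam 1 y)) x = psiB lam tc k 0 x) ∧
    (∀ x, inReg lam 0 x ∨ inReg lam 1 x ∨ inReg lam 2 x →
        airy (vEnrich lam area k 0) x = psiFun lam tc k 0 x) ∧
    (∀ x, inReg lam 0 x ∨ inReg lam 1 x ∨ inReg lam 2 x → ∀ i : Fin 2,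
        pd 0 (fun y => psiFun lam tc k 0 y i 0) x +
          pd 1 (fun y => psiFun lam tc k 0 y i 1) x = 0) :=
  airy_potential_of_enrichment_stress_general v lam g cst hlam hdelta vc hvc tc htc area harea k
end
end

section
/- Let k ≥ 1 be an integer. For every x ∈ ℝ² with λ1(x) = λ2(x) and every n ∈ ℝ² with n · (v0 − vc) = 0, the two branch formulas of ψ0 agree when applied to n: [2(λ0(x) − λ2(x))^k sym(t_{c,0}⊗t_{c,1}) − k(λ0(x) − λ2(x))^{k−1}(λ1(x) − λ2(x)) t_{c,1}⊗t_{c,1}] n = [−2(λ0(x) − λ1(x))^k sym(t_{c,0}⊗t_{c,2}) + k(λ0(x) − λ1(x))^{k−1}(λ2(x) − λ1(x)) t_{c,2}⊗t_{c,2}] n. That is, the normal component of the enrichment stress ψ0 is continuous across the line through v0 and vc, so ψ0 is H(div)-conforming on T. -/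
noncomputable section

open Matrix MeasureTheory

/-- on the line `λ₁ = λ₂` (through `v₀` and `v_c`), the two branch formulas of
the enrichment stress `ψ₀` have the same normal component: `ψ₀` is `H(div)`-conforming. -/
theorem psi0_normal_component_continuous
    (v : Fin 3 → Vec2) (hv : AffineIndependent ℝ v)
    (lam : Fin 3 → Vec2 → ℝ) (g : Fin 3 → Vec2) (cst : Fin 3 → ℝ)
    (hlam : ∀ i x, lam i x = dot2 (g i) x + cst i)
    (hdelta : ∀ i j, lam i (v j) = if i = j then 1 else 0)
    (vc : Vec2) (hvc : vc = (1 / 3 : ℝ) • (v 0 + v 1 + v 2))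
    (tc : Fin 3 → Vec2) (htc : ∀ i, tc i = v i - vc)
    (k : ℕ) (hk : 1 ≤ k)
    (x : Vec2) (hx : lam 1 x = lam 2 x)
    (nv : Vec2) (hnv : dot2 nv (v 0 - vc) = 0) :
    Matrix.mulVec (psiA lam tc k 0 x) nv = Matrix.mulVec (psiB lam tc k 0 x) nv := by
  have hsum : ∀ j : Fin 2, tc 1 j = -tc 0 j - tc 2 j := by
    intro j
    rw [htc 0, htc 1, htc 2, hvc]
    simp [Pi.sub_apply]
    ring
  have hdot : tc 0 0 * nv 0 + tc 0 1 * nv 1 = 0 := by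
    have := hnv
    rw [← htc 0] at this
    simp [dot2] at this
    linarith
  have e0 := hsum 0
  have e1 := hsum 1
  funext i
  fin_cases i <;>
    simp only [Matrix.mulVec, dotProduct, psiA, psiB, symOuter, outer, Fin.sum_univ_two,
      Matrix.sub_apply, Matrix.add_apply, Matrix.neg_apply, Matrix.smul_apply,
      Pi.add_apply, Pi.smul_apply, smul_eq_mul, Fin.isValue, Fin.mk_zero, Fin.mk_one,
      show (0:Fin 3) + 1 = 1 from rfl, show (0:Fin 3) + 2 = 2 from rfl, hx, e0, e1]
  · linear_combination (-2 * (lam 0 x - lam 2 x) ^ k * tc 0 0) * hdot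
  · linear_combination (-2 * (lam 0 x - lam 2 x) ^ k * tc 0 1) * hdot
end
end

section
/- Let k ≥ 2 be an integer and write v_{0,1} = v_{0,0+1} and v_{0,2} = v_{0,0+2}. Then v_{0,1} and v_{0,2} are continuously differentiable on ℝ² and satisfy: (i) v_{0,1}(x) = v_{0,2}(x) = 0 for every x ∈ ∂T (the union of the three edges of T); (ii) the total derivative of v_{0,1} and of v_{0,2} vanishes at each vertex v0, v1, v2; (iii) for every x in the closed edge e1, the derivative of v_{0,1} at x in the direction n1 equals −(8|T|²/9) c_{1,1} λ0(x)^k λ2(x), while the derivative of v_{0,1} in direction n0 vanishes at every x ∈ e0 and its derivative in direction n2 vanishes at every x ∈ e2; (iv) for every x in the closed edge e2, the derivative of v_{0,2} at x in the direction n2 equals (8|T|²/9) c_{2,2} λ0(x)^k λ1(x), while the derivative of v_{0,2} in direction n0 vanishes at every x ∈ e0 and its derivative in direction n1 vanishes at every x ∈ e1. -/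
noncomputable section

open Matrix MeasureTheory

/-!
Write `a = λ₀ - λ₁` and `b = λ₀ - λ₂`. Then `λ₀ᴿ = max (max a b) 0` and `λ₂ - λ₁ = a - b`, so the
only non-polynomial part of `v_{0,1}` and `v_{0,2}` is `(λ₀ᴿ)^{k+1} (λ₂ - λ₁) = (a - b) p (max a b)`
with `p s = (max s 0)^{k+1}`. Such a function is C¹ for every C¹ function `p`: off the diagonal
`a = b` it is locally `(a - b) p a` or `(a - b) p b`, and on the diagonal the factor `a - b` vanishes,
so the Leibniz rule holds there although `p ∘ max` is merely continuous. On the edge `eⱼ` we have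
`λⱼ = 0 ≤ λ_{j+1}, λ_{j+2}`, which fixes the branch of the max, and the derivative of `v_{0,1}` and
`v_{0,2}` reduces to a multiple of `∇λⱼ`; that multiple vanishes at the vertices.
-/

open Asymptotics Filter Topology ContinuousLinearMap

theorem HasFDerivAt.mul_of_eq_zero_of_continuousAt {E : Type*} [NormedAddCommGroup E]
    [NormedSpace ℝ E] {f g : E → ℝ} {f' : E →L[ℝ] ℝ} {x : E} (hf : HasFDerivAt f f' x)
    (hfx : f x = 0) (hg : ContinuousAt g x) :
    HasFDerivAt (fun y => f y * g y) (g x • f') x := by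
  refine .of_isLittleO (IsLittleO.of_norm_right ?_)
  have hrem : (fun y => (f y - f x - f' (y - x)) * g y) =o[𝓝 x] fun y => ‖y - x‖ := by
    simpa using hf.isLittleO.norm_right.mul_isBigO (hg.tendsto.isBigO_one ℝ)
  have hlin : (fun y => f' (y - x) * (g y - g x)) =o[𝓝 x] fun y => ‖y - x‖ := by
    have hg0 : (fun y => g y - g x) =o[𝓝 x] fun _ => (1 : ℝ) :=
      (isLittleO_one_iff ℝ).2 (tendsto_sub_nhds_zero_iff.2 hg.tendsto)
    simpa using (f'.isBigO_sub (𝓝 x) x).norm_right.mul_isLittleO hg0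
  refine (hrem.add hlin).congr_left fun y => ?_
  simp only [hfx, _root_.smul_apply, smul_eq_mul]
  ring

section SubMulMax

variable (p p' : ℝ → ℝ)

def subMulMax (z : ℝ × ℝ) : ℝ := (z.1 - z.2) * p (max z.1 z.2)

def subMulMaxDeriv (z : ℝ × ℝ) : ℝ × ℝ →L[ℝ] ℝ :=
  p (max z.1 z.2) • (fst ℝ ℝ ℝ - snd ℝ ℝ ℝ) +
    (p' (max z.1 z.2) * max (z.1 - z.2) 0) • fst ℝ ℝ ℝ +
    (p' (max z.1 z.2) * min (z.1 - z.2) 0) • snd ℝ ℝ ℝ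

variable {p p'}

theorem subMulMaxDeriv_of_le {z : ℝ × ℝ} (h : z.2 ≤ z.1) :
    subMulMaxDeriv p p' z =
      p z.1 • (fst ℝ ℝ ℝ - snd ℝ ℝ ℝ) + (p' z.1 * (z.1 - z.2)) • fst ℝ ℝ ℝ := by
  simp [subMulMaxDeriv, max_eq_left h, max_eq_left (sub_nonneg.2 h),
    min_eq_right (sub_nonneg.2 h)]

theorem subMulMaxDeriv_of_ge {z : ℝ × ℝ} (h : z.1 ≤ z.2) :
    subMulMaxDeriv p p' z =
      p z.2 • (fst ℝ ℝ ℝ - snd ℝ ℝ ℝ) + (p' z.2 * (z.1 - z.2)) • snd ℝ ℝ ℝ := by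
  simp [subMulMaxDeriv, max_eq_right h, max_eq_right (sub_nonpos.2 h),
    min_eq_left (sub_nonpos.2 h)]

theorem subMulMaxDeriv_eq_zero {z : ℝ × ℝ} (hp : p (max z.1 z.2) = 0)
    (hp' : p' (max z.1 z.2) = 0) : subMulMaxDeriv p p' z = 0 := by
  simp [subMulMaxDeriv, hp, hp']

theorem hasFDerivAt_subMulMax (hp : ∀ t, HasDerivAt p (p' t) t) (z : ℝ × ℝ) :
    HasFDerivAt (subMulMax p) (subMulMaxDeriv p p' z) z := by
  have hsub : HasFDerivAt (fun w : ℝ × ℝ => w.1 - w.2) (fst ℝ ℝ ℝ - snd ℝ ℝ ℝ) z :=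
    hasFDerivAt_fst.sub hasFDerivAt_snd
  rcases lt_trichotomy z.2 z.1 with hlt | heq | hgt
  · have hloc : subMulMax p =ᶠ[𝓝 z] fun w => (w.1 - w.2) * p w.1 := by
      filter_upwards [(isOpen_lt continuous_snd continuous_fst).mem_nhds hlt] with w hw
      simp [subMulMax, max_eq_left hw.le]
    refine ((hsub.mul ((hp z.1).comp_hasFDerivAt z hasFDerivAt_fst)).congr_of_eventuallyEq
      hloc).congr_fderiv ?_
    rw [subMulMaxDeriv_of_le hlt.le]
    ext
    · simp; ring
    · simp
  · have hcont : Continuous fun w : ℝ × ℝ => p (max w.1 w.2) :=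
      (continuous_iff_continuousAt.2 fun t => (hp t).continuousAt).comp
        (continuous_fst.max continuous_snd)
    refine (hsub.mul_of_eq_zero_of_continuousAt (sub_eq_zero.2 heq.symm)
      hcont.continuousAt).congr_fderiv ?_
    simp [subMulMaxDeriv, heq]
  · have hloc : subMulMax p =ᶠ[𝓝 z] fun w => (w.1 - w.2) * p w.2 := by
      filter_upwards [(isOpen_lt continuous_fst continuous_snd).mem_nhds hgt] with w hw
      simp [subMulMax, max_eq_right hw.le]
    refine ((hsub.mul ((hp z.2).comp_hasFDerivAt z hasFDerivAt_snd)).congr_of_eventuallyEq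
      hloc).congr_fderiv ?_
    rw [subMulMaxDeriv_of_ge hgt.le]
    ext
    · simp
    · simp; ring

theorem contDiff_subMulMax (hp : ∀ t, HasDerivAt p (p' t) t) (hp' : Continuous p') :
    ContDiff ℝ 1 (subMulMax p) := by
  refine contDiff_one_iff_fderiv.2 ⟨fun z => (hasFDerivAt_subMulMax hp z).differentiableAt, ?_⟩
  rw [funext fun z => (hasFDerivAt_subMulMax hp z).fderiv]
  have hpc : Continuous p := continuous_iff_continuousAt.2 fun t => (hp t).continuousAt
  unfold subMulMaxDeriv
  fun_prop

end SubMulMax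

theorem hasDerivAt_max_zero_pow_succ {k : ℕ} (hk : k ≠ 0) (t : ℝ) :
    HasDerivAt (fun s => max s 0 ^ (k + 1)) ((k + 1) * max t 0 ^ k) t := by
  have h := (hasFDerivAt_subMulMax (fun s => hasDerivAt_pow k s) (t, 0)).comp_hasDerivAt t
    ((hasDerivAt_id t).prodMk (hasDerivAt_const t (0 : ℝ)))
  -- `max s 0 ^ (k + 1) = (s - 0) * (max s 0) ^ k` as `k ≠ 0`
  have hfun : (fun s => max s 0 ^ (k + 1)) = subMulMax (· ^ k) ∘ fun s => (id s, (0 : ℝ)) := by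
    ext s
    rcases le_total s 0 with hs | hs
    · simp [subMulMax, max_eq_right hs, hk]
    · simp [subMulMax, max_eq_left hs, pow_succ']
  have hval : subMulMaxDeriv (· ^ k) (fun s => k * s ^ (k - 1)) (t, 0) (1, 0) =
      (k + 1) * max t 0 ^ k := by
    rcases le_total t 0 with ht | ht
    · simp [subMulMaxDeriv, max_eq_right ht, hk]
    · simp [subMulMaxDeriv, max_eq_left ht]
      rw [mul_assoc, ← pow_succ, Nat.sub_add_cancel (Nat.pos_of_ne_zero hk)]
      ring
  rwa [hfun, ← hval]

def dot2L (a : Vec2) : Vec2 →L[ℝ] ℝ :=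
  a 0 • ContinuousLinearMap.proj 0 + a 1 • ContinuousLinearMap.proj 1

theorem dot2L_apply (a y : Vec2) : dot2L a y = dot2 a y := by
  simp [dot2L, dot2]

theorem hasFDerivAt_of_eq_dot2_add {f : Vec2 → ℝ} {a : Vec2} {c : ℝ}
    (hf : ∀ y, f y = dot2 a y + c) (x : Vec2) : HasFDerivAt f (dot2L a) x := by
  rw [funext hf]
  simpa only [dot2L_apply] using (dot2L a).hasFDerivAt.add_const c

theorem contDiff_of_eq_dot2_add {f : Vec2 → ℝ} {a : Vec2} {c : ℝ}
    (hf : ∀ y, f y = dot2 a y + c) : ContDiff ℝ 1 f := by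
  rw [funext hf]
  simpa only [dot2L_apply] using (dot2L a).contDiff.add (contDiff_const (c := c))

theorem lam_nonneg_and_eq_zero_of_mem_edgeSeg {v : Fin 3 → Vec2} {lam : Fin 3 → Vec2 → ℝ}
    {g : Fin 3 → Vec2} {cst : Fin 3 → ℝ} (hlam : ∀ i x, lam i x = dot2 (g i) x + cst i)
    (hdelta : ∀ i j, lam i (v j) = if i = j then 1 else 0) {j : Fin 3} {x : Vec2}
    (hx : x ∈ edgeSeg v j) : (∀ i, 0 ≤ lam i x) ∧ lam j x = 0 := by
  obtain ⟨a, b, ha, hb, hab, rfl⟩ := hx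
  have hcomb : ∀ i, lam i (a • v (j + 1) + b • v (j + 2)) =
      a * lam i (v (j + 1)) + b * lam i (v (j + 2)) := by
    intro i
    simp only [hlam, dot2, Pi.add_apply, Pi.smul_apply, smul_eq_mul]
    linear_combination (-cst i) * hab
  refine ⟨fun i => ?_, ?_⟩
  · rw [hcomb, hdelta, hdelta]
    split_ifs <;> positivity
  · rw [hcomb, hdelta, hdelta]
    fin_cases j <;> simp

section Enrichment

variable {lam : Fin 3 → Vec2 → ℝ} {l : Fin 3 → Vec2 →L[ℝ] ℝ} {area : ℝ} {k : ℕ} {x : Vec2}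

def enrichCorr (lam : Fin 3 → Vec2 → ℝ) (k : ℕ) (x : Vec2) : ℝ :=
  (lamR lam 0 x ^ (k + 1) - lam 0 x ^ (k + 1)) * (lam 2 x - lam 1 x)

def bubble (lam : Fin 3 → Vec2 → ℝ) (k : ℕ) (x : Vec2) : ℝ := lam 0 x ^ k * lam 1 x * lam 2 x

theorem vE1_zero_eq (lam : Fin 3 → Vec2 → ℝ) (area : ℝ) (k : ℕ) :
    vE1 lam area k 0 = fun x =>
      4 * area ^ 2 / 9 / (k + 1) * enrichCorr lam k x - 4 * area ^ 2 / 9 * bubble lam k x := by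
  ext x
  simp only [vE1, enrichCorr, bubble, zero_add]
  ring

theorem vE2_zero_eq (lam : Fin 3 → Vec2 → ℝ) (area : ℝ) (k : ℕ) :
    vE2 lam area k 0 = fun x =>
      4 * area ^ 2 / 9 / (k + 1) * enrichCorr lam k x + 4 * area ^ 2 / 9 * bubble lam k x := by
  ext x
  simp only [vE2, enrichCorr, bubble, zero_add]
  ring

theorem lamR_zero_eq_max (lam : Fin 3 → Vec2 → ℝ) (x : Vec2) :
    lamR lam 0 x = max (max (lam 0 x - lam 1 x) (lam 0 x - lam 2 x)) 0 := by
  rw [lamR, ← max_sub_sub_left, ← max_sub_sub_left, sub_self, max_comm]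

theorem enrichCorr_eq_subMulMax (lam : Fin 3 → Vec2 → ℝ) (k : ℕ) (x : Vec2) :
    enrichCorr lam k x =
      subMulMax (fun s => max s 0 ^ (k + 1)) (lam 0 x - lam 1 x, lam 0 x - lam 2 x) -
        lam 0 x ^ (k + 1) * (lam 2 x - lam 1 x) := by
  rw [enrichCorr, subMulMax, lamR_zero_eq_max]
  ring_nf

theorem contDiff_enrichCorr (hlam : ∀ i, ContDiff ℝ 1 (lam i)) (hk : k ≠ 0) :
    ContDiff ℝ 1 (enrichCorr lam k) := by
  have hF := contDiff_subMulMax (hasDerivAt_max_zero_pow_succ hk) (by fun_prop)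
  have hl0 := hlam 0; have hl1 := hlam 1; have hl2 := hlam 2
  rw [funext (enrichCorr_eq_subMulMax lam k)]
  fun_prop

theorem contDiff_vE1_zero (hlam : ∀ i, ContDiff ℝ 1 (lam i)) (hk : k ≠ 0) :
    ContDiff ℝ 1 (vE1 lam area k 0) := by
  have hW := contDiff_enrichCorr hlam hk
  have hl0 := hlam 0; have hl1 := hlam 1; have hl2 := hlam 2
  rw [vE1_zero_eq]
  unfold bubble
  fun_prop

theorem contDiff_vE2_zero (hlam : ∀ i, ContDiff ℝ 1 (lam i)) (hk : k ≠ 0) :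
    ContDiff ℝ 1 (vE2 lam area k 0) := by
  have hW := contDiff_enrichCorr hlam hk
  have hl0 := hlam 0; have hl1 := hlam 1; have hl2 := hlam 2
  rw [vE2_zero_eq]
  unfold bubble
  fun_prop

theorem vE_zero_eq_zero_of_nonneg_of_eq_zero {j : Fin 3} (hk : k ≠ 0)
    (hnonneg : ∀ i, 0 ≤ lam i x) (hj : lam j x = 0) :
    vE1 lam area k 0 x = 0 ∧ vE2 lam area k 0 x = 0 := by
  have hmin : min (lam 0 x) (min (lam 1 x) (lam 2 x)) = 0 := by
    refine le_antisymm ?_ (le_min (hnonneg 0) (le_min (hnonneg 1) (hnonneg 2)))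
    fin_cases j <;> simp_all
  have hW : enrichCorr lam k x = 0 := by simp [enrichCorr, lamR, hmin]
  have hb : bubble lam k x = 0 := by fin_cases j <;> simp_all [bubble]
  simp [vE1_zero_eq, vE2_zero_eq, hW, hb]

theorem hasFDerivAt_enrichCorr (hlam : ∀ i, HasFDerivAt (lam i) (l i) x) (hk : k ≠ 0) :
    HasFDerivAt (enrichCorr lam k)
      ((subMulMaxDeriv (fun s => max s 0 ^ (k + 1)) (fun s => (k + 1) * max s 0 ^ k)
          (lam 0 x - lam 1 x, lam 0 x - lam 2 x)).comp ((l 0 - l 1).prod (l 0 - l 2)) -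
        lam 0 x ^ (k + 1) • (l 2 - l 1) -
        ((k + 1) * lam 0 x ^ k * (lam 2 x - lam 1 x)) • l 0) x := by
  have hA := ((hlam 0).sub (hlam 1)).prodMk ((hlam 0).sub (hlam 2))
  have hF := (hasFDerivAt_subMulMax (hasDerivAt_max_zero_pow_succ hk) _).comp x hA
  have hP := ((hlam 0).pow (k + 1)).mul ((hlam 2).sub (hlam 1))
  rw [funext (enrichCorr_eq_subMulMax lam k)]
  refine (hF.sub hP).congr_fderiv ?_
  ext y
  simp
  ring

theorem hasFDerivAt_enrichCorr_of_lam_zero_eq_zero (hlam : ∀ i, HasFDerivAt (lam i) (l i) x)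
    (hk : k ≠ 0) (h0 : lam 0 x = 0) (h1 : 0 ≤ lam 1 x) (h2 : 0 ≤ lam 2 x) :
    HasFDerivAt (enrichCorr lam k) (0 : Vec2 →L[ℝ] ℝ) x := by
  have hmax : max (lam 0 x - lam 1 x) (lam 0 x - lam 2 x) ≤ 0 := by
    rw [h0]
    exact max_le (by linarith) (by linarith)
  refine (hasFDerivAt_enrichCorr hlam hk).congr_fderiv ?_
  rw [subMulMaxDeriv_eq_zero (by simp [max_eq_right hmax, hk]) (by simp [max_eq_right hmax, hk])]
  simp [h0, hk]

theorem hasFDerivAt_enrichCorr_of_lam_one_eq_zero (hlam : ∀ i, HasFDerivAt (lam i) (l i) x)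
    (hk : k ≠ 0) (h1 : lam 1 x = 0) (h0 : 0 ≤ lam 0 x) (h2 : 0 ≤ lam 2 x) :
    HasFDerivAt (enrichCorr lam k) ((-(k + 1) * lam 0 x ^ k * lam 2 x) • l 1) x := by
  refine (hasFDerivAt_enrichCorr hlam hk).congr_fderiv ?_
  rw [subMulMaxDeriv_of_le (by simp only; linarith)]
  ext y
  simp [h1, max_eq_left h0]
  ring

theorem hasFDerivAt_enrichCorr_of_lam_two_eq_zero (hlam : ∀ i, HasFDerivAt (lam i) (l i) x)
    (hk : k ≠ 0) (h2 : lam 2 x = 0) (h0 : 0 ≤ lam 0 x) (h1 : 0 ≤ lam 1 x) :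
    HasFDerivAt (enrichCorr lam k) (((k + 1) * lam 0 x ^ k * lam 1 x) • l 2) x := by
  refine (hasFDerivAt_enrichCorr hlam hk).congr_fderiv ?_
  rw [subMulMaxDeriv_of_ge (by simp only; linarith)]
  ext y
  simp [h2, max_eq_left h0]
  ring

theorem hasFDerivAt_bubble (hlam : ∀ i, HasFDerivAt (lam i) (l i) x) :
    HasFDerivAt (bubble lam k) ((k * lam 0 x ^ (k - 1) * lam 1 x * lam 2 x) • l 0 +
      (lam 0 x ^ k * lam 2 x) • l 1 + (lam 0 x ^ k * lam 1 x) • l 2) x := by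
  refine ((((hlam 0).pow k).mul (hlam 1)).mul (hlam 2)).congr_fderiv ?_
  ext y
  simp
  ring

theorem hasFDerivAt_vE_zero_of_lam_zero_eq_zero (hlam : ∀ i, HasFDerivAt (lam i) (l i) x)
    (hk : 2 ≤ k) (h0 : lam 0 x = 0) (h1 : 0 ≤ lam 1 x) (h2 : 0 ≤ lam 2 x) :
    HasFDerivAt (vE1 lam area k 0) (0 : Vec2 →L[ℝ] ℝ) x ∧
      HasFDerivAt (vE2 lam area k 0) (0 : Vec2 →L[ℝ] ℝ) x := by
  have hk0 : k ≠ 0 := by omega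
  have hk1 : k - 1 ≠ 0 := by omega
  have hW := hasFDerivAt_enrichCorr_of_lam_zero_eq_zero hlam hk0 h0 h1 h2
  have hb := hasFDerivAt_bubble (k := k) hlam
  rw [show (k * lam 0 x ^ (k - 1) * lam 1 x * lam 2 x) • l 0 + (lam 0 x ^ k * lam 2 x) • l 1 +
      (lam 0 x ^ k * lam 1 x) • l 2 = 0 by simp [h0, hk0, hk1]] at hb
  rw [vE1_zero_eq, vE2_zero_eq]
  exact ⟨((hW.const_mul _).sub (hb.const_mul _)).congr_fderiv (by simp),
    ((hW.const_mul _).add (hb.const_mul _)).congr_fderiv (by simp)⟩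

theorem hasFDerivAt_vE_zero_of_lam_one_eq_zero (hlam : ∀ i, HasFDerivAt (lam i) (l i) x)
    (hk : k ≠ 0) (h1 : lam 1 x = 0) (h0 : 0 ≤ lam 0 x) (h2 : 0 ≤ lam 2 x) :
    HasFDerivAt (vE1 lam area k 0) ((-(8 * area ^ 2 / 9) * lam 0 x ^ k * lam 2 x) • l 1) x ∧
      HasFDerivAt (vE2 lam area k 0) (0 : Vec2 →L[ℝ] ℝ) x := by
  have hW := hasFDerivAt_enrichCorr_of_lam_one_eq_zero hlam hk h1 h0 h2
  have hb := hasFDerivAt_bubble (k := k) hlam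
  have hk1 : (k : ℝ) + 1 ≠ 0 := by positivity
  rw [vE1_zero_eq, vE2_zero_eq]
  constructor
  · refine ((hW.const_mul _).sub (hb.const_mul _)).congr_fderiv ?_
    ext y
    simp [h1]
    field_simp
    ring
  · refine ((hW.const_mul _).add (hb.const_mul _)).congr_fderiv ?_
    ext y
    simp [h1]
    field_simp
    ring

theorem hasFDerivAt_vE_zero_of_lam_two_eq_zero (hlam : ∀ i, HasFDerivAt (lam i) (l i) x)
    (hk : k ≠ 0) (h2 : lam 2 x = 0) (h0 : 0 ≤ lam 0 x) (h1 : 0 ≤ lam 1 x) :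
    HasFDerivAt (vE1 lam area k 0) (0 : Vec2 →L[ℝ] ℝ) x ∧
      HasFDerivAt (vE2 lam area k 0) ((8 * area ^ 2 / 9 * lam 0 x ^ k * lam 1 x) • l 2) x := by
  have hW := hasFDerivAt_enrichCorr_of_lam_two_eq_zero hlam hk h2 h0 h1
  have hb := hasFDerivAt_bubble (k := k) hlam
  have hk1 : (k : ℝ) + 1 ≠ 0 := by positivity
  rw [vE1_zero_eq, vE2_zero_eq]
  constructor
  · refine ((hW.const_mul _).sub (hb.const_mul _)).congr_fderiv ?_
    ext y
    simp [h2]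
    field_simp
    ring
  · refine ((hW.const_mul _).add (hb.const_mul _)).congr_fderiv ?_
    ext y
    simp [h2]
    field_simp
    ring

end Enrichment

theorem edge_enrichment_traces_general
    (v : Fin 3 → Vec2)
    (lam : Fin 3 → Vec2 → ℝ) (g : Fin 3 → Vec2) (cst : Fin 3 → ℝ)
    (hlam : ∀ i x, lam i x = dot2 (g i) x + cst i)
    (hdelta : ∀ i j, lam i (v j) = if i = j then 1 else 0)
    (area : ℝ)
    (n : Fin 3 → Vec2)
    (k : ℕ) (hk : 2 ≤ k) :
    ContDiff ℝ 1 (vE1 lam area k 0) ∧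
    ContDiff ℝ 1 (vE2 lam area k 0) ∧
    (∀ j : Fin 3, ∀ x ∈ edgeSeg v j, vE1 lam area k 0 x = 0 ∧ vE2 lam area k 0 x = 0) ∧
    (∀ i : Fin 3, fderiv ℝ (vE1 lam area k 0) (v i) = 0 ∧
      fderiv ℝ (vE2 lam area k 0) (v i) = 0) ∧
    (∀ x ∈ edgeSeg v 1, fderiv ℝ (vE1 lam area k 0) x (n 1)
        = -(8 * area ^ 2 / 9) * dot2 (g 1) (n 1) * (lam 0 x) ^ k * lam 2 x) ∧
    (∀ x ∈ edgeSeg v 0, fderiv ℝ (vE1 lam area k 0) x (n 0) = 0) ∧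
    (∀ x ∈ edgeSeg v 2, fderiv ℝ (vE1 lam area k 0) x (n 2) = 0) ∧
    (∀ x ∈ edgeSeg v 2, fderiv ℝ (vE2 lam area k 0) x (n 2)
        = 8 * area ^ 2 / 9 * dot2 (g 2) (n 2) * (lam 0 x) ^ k * lam 1 x) ∧
    (∀ x ∈ edgeSeg v 0, fderiv ℝ (vE2 lam area k 0) x (n 0) = 0) ∧
    (∀ x ∈ edgeSeg v 1, fderiv ℝ (vE2 lam area k 0) x (n 1) = 0) := by
  have hk0 : k ≠ 0 := by omega
  have hl x : ∀ i, HasFDerivAt (lam i) (dot2L (g i)) x :=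
    fun i => hasFDerivAt_of_eq_dot2_add (hlam i) x
  have hedge {j x} (hx : x ∈ edgeSeg v j) := lam_nonneg_and_eq_zero_of_mem_edgeSeg hlam hdelta hx
  have e0 x (hx : x ∈ edgeSeg v 0) :=
    hasFDerivAt_vE_zero_of_lam_zero_eq_zero (area := area) (hl x) hk (hedge hx).2
      ((hedge hx).1 1) ((hedge hx).1 2)
  have e1 x (hx : x ∈ edgeSeg v 1) :=
    hasFDerivAt_vE_zero_of_lam_one_eq_zero (area := area) (hl x) hk0 (hedge hx).2
      ((hedge hx).1 0) ((hedge hx).1 2)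
  have e2 x (hx : x ∈ edgeSeg v 2) :=
    hasFDerivAt_vE_zero_of_lam_two_eq_zero (area := area) (hl x) hk0 (hedge hx).2
      ((hedge hx).1 0) ((hedge hx).1 1)
  refine ⟨contDiff_vE1_zero (fun i => contDiff_of_eq_dot2_add (hlam i)) hk0,
    contDiff_vE2_zero (fun i => contDiff_of_eq_dot2_add (hlam i)) hk0,
    fun j x hx => vE_zero_eq_zero_of_nonneg_of_eq_zero hk0 (hedge hx).1 (hedge hx).2,
    fun i => ?_, fun x hx => ?_, fun x hx => ?_, fun x hx => ?_, fun x hx => ?_,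
    fun x hx => ?_, fun x hx => ?_⟩
  · fin_cases i
    · obtain ⟨h1, h2⟩ := e1 (v 0) (right_mem_segment ℝ (v 2) (v 0))
      simp [h1.fderiv, h2.fderiv, hdelta]
    · obtain ⟨h1, h2⟩ := e0 (v 1) (left_mem_segment ℝ (v 1) (v 2))
      simp [h1.fderiv, h2.fderiv]
    · obtain ⟨h1, h2⟩ := e0 (v 2) (right_mem_segment ℝ (v 1) (v 2))
      simp [h1.fderiv, h2.fderiv]
  · simp [(e1 x hx).1.fderiv, dot2L_apply]; ring
  · simp [(e0 x hx).1.fderiv]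
  · simp [(e2 x hx).1.fderiv]
  · simp [(e2 x hx).2.fderiv, dot2L_apply]; ring
  · simp [(e0 x hx).2.fderiv]
  · simp [(e1 x hx).2.fderiv]

/-- trace and normal-derivative properties of the edge enrichment functions
`v_{0,1}` and `v_{0,2}` for `k ≥ 2`. -/
theorem edge_enrichment_traces
    (v : Fin 3 → Vec2) (hv : AffineIndependent ℝ v)
    (lam : Fin 3 → Vec2 → ℝ) (g : Fin 3 → Vec2) (cst : Fin 3 → ℝ)
    (hlam : ∀ i x, lam i x = dot2 (g i) x + cst i)
    (hdelta : ∀ i j, lam i (v j) = if i = j then 1 else 0)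
    (area : ℝ) (harea : area = |detT v| / 2)
    (n : Fin 3 → Vec2) (hn1 : ∀ j, dot2 (n j) (n j) = 1)
    (hn2 : ∀ j, dot2 (n j) (v (j + 2) - v (j + 1)) = 0)
    (k : ℕ) (hk : 2 ≤ k) :
    ContDiff ℝ 1 (vE1 lam area k 0) ∧
    ContDiff ℝ 1 (vE2 lam area k 0) ∧
    (∀ j : Fin 3, ∀ x ∈ edgeSeg v j, vE1 lam area k 0 x = 0 ∧ vE2 lam area k 0 x = 0) ∧
    (∀ i : Fin 3, fderiv ℝ (vE1 lam area k 0) (v i) = 0 ∧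
      fderiv ℝ (vE2 lam area k 0) (v i) = 0) ∧
    (∀ x ∈ edgeSeg v 1, fderiv ℝ (vE1 lam area k 0) x (n 1)
        = -(8 * area ^ 2 / 9) * dot2 (g 1) (n 1) * (lam 0 x) ^ k * lam 2 x) ∧
    (∀ x ∈ edgeSeg v 0, fderiv ℝ (vE1 lam area k 0) x (n 0) = 0) ∧
    (∀ x ∈ edgeSeg v 2, fderiv ℝ (vE1 lam area k 0) x (n 2) = 0) ∧
    (∀ x ∈ edgeSeg v 2, fderiv ℝ (vE2 lam area k 0) x (n 2)
        = 8 * area ^ 2 / 9 * dot2 (g 2) (n 2) * (lam 0 x) ^ k * lam 1 x) ∧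
    (∀ x ∈ edgeSeg v 0, fderiv ℝ (vE2 lam area k 0) x (n 0) = 0) ∧
    (∀ x ∈ edgeSeg v 1, fderiv ℝ (vE2 lam area k 0) x (n 1) = 0) :=
  edge_enrichment_traces_general v lam g cst hlam hdelta area n k hk
end
end

section
/- With k = 1, the identity c_{0,0} w0(x) + c_{1,1} w1(x) + c_{2,2} w2(x) = (3/2) λ0(x) λ1(x) λ2(x) holds for every x ∈ ℝ². In particular, the cubic bubble λ0λ1λ2 restricted to T lies in span{w0, w1, w2}. -/
noncomputable section

open Matrix MeasureTheory

/-- `c₀,₀ w₀ + c₁,₁ w₁ + c₂,₂ w₂ = (3/2) λ₀λ₁λ₂` on `ℝ²`; in particular the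
cubic bubble restricted to `T` lies in `span{w₀, w₁, w₂}`. -/
theorem bubble_in_span_w
    (v : Fin 3 → Vec2) (hv : AffineIndependent ℝ v)
    (lam : Fin 3 → Vec2 → ℝ) (g : Fin 3 → Vec2) (cst : Fin 3 → ℝ)
    (hlam : ∀ i x, lam i x = dot2 (g i) x + cst i)
    (hdelta : ∀ i j, lam i (v j) = if i = j then 1 else 0)
    (area : ℝ) (harea : area = |detT v| / 2)
    (n : Fin 3 → Vec2) (hn1 : ∀ j, dot2 (n j) (n j) = 1)
    (hn2 : ∀ j, dot2 (n j) (v (j + 2) - v (j + 1)) = 0)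
    (hcc : ∀ j, dot2 (g j) (n j) ≠ 0) :
    (∀ x, dot2 (g 0) (n 0) * wFun lam g n area 0 x + dot2 (g 1) (n 1) * wFun lam g n area 1 x +
        dot2 (g 2) (n 2) * wFun lam g n area 2 x = 3 / 2 * (lam 0 x * lam 1 x * lam 2 x)) ∧
      (fun x : Tset v => lam 0 x.1 * lam 1 x.1 * lam 2 x.1) ∈
        Submodule.span ℝ
          ({fun x : Tset v => wFun lam g n area 0 x.1,
            fun x : Tset v => wFun lam g n area 1 x.1,
            fun x : Tset v => wFun lam g n area 2 x.1} : Set ((Tset v) → ℝ)) := by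

  -- abbreviations
  have hd : ∀ i j : Fin 3, dot2 (g i) (v j) = (if i = j then (1:ℝ) else 0) - cst i := by
    intro i j
    have h1 := hlam i (v j)
    have h2 := hdelta i j
    rw [h2] at h1
    linarith
  have e1 : dot2 (g 1) (v 1) - dot2 (g 1) (v 0) = 1 := by simp [hd]
  have e2 : dot2 (g 1) (v 2) - dot2 (g 1) (v 0) = 0 := by simp [hd]
  have e3 : dot2 (g 2) (v 1) - dot2 (g 2) (v 0) = 0 := by simp [hd]
  have e4 : dot2 (g 2) (v 2) - dot2 (g 2) (v 0) = 1 := by simp [hd]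
  have hdet : detT v * (g 1 0 * g 2 1 - g 1 1 * g 2 0) = 1 := by
    unfold dot2 at e1 e2 e3 e4
    unfold detT
    linear_combination (g 2 0 * (v 2 0 - v 0 0) + g 2 1 * (v 2 1 - v 0 1)) * e1 + e4
      - (g 2 0 * (v 1 0 - v 0 0) + g 2 1 * (v 1 1 - v 0 1)) * e2
  have hdT : detT v ≠ 0 := by
    intro h
    rw [h, zero_mul] at hdet
    exact zero_ne_one hdet
  have hA : area ≠ 0 := by
    rw [harea]
    simpa using hdT
  have key : ∀ x, dot2 (g 0) (n 0) * wFun lam g n area 0 x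
      + dot2 (g 1) (n 1) * wFun lam g n area 1 x
      + dot2 (g 2) (n 2) * wFun lam g n area 2 x
      = 3 / 2 * (lam 0 x * lam 1 x * lam 2 x) := by
    intro x
    simp only [wFun, vE1, vE2, lamR, show ((0:Fin 3)+1) = 1 from rfl,
      show ((0:Fin 3)+2) = 2 from rfl, show ((1:Fin 3)+1) = 2 from rfl,
      show ((1:Fin 3)+2) = 0 from rfl, show ((2:Fin 3)+1) = 0 from rfl,
      show ((2:Fin 3)+2) = 1 from rfl]
    norm_num
    set a := lam 0 x with ha
    set b := lam 1 x with hb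
    set c := lam 2 x with hc
    set M := min a (min b c) with hM
    have c0 := hcc 0
    have c1 := hcc 1
    have c2 := hcc 2
    field_simp
    ring
  refine ⟨key, ?_⟩
  have key2 : (fun x : Tset v => lam 0 x.1 * lam 1 x.1 * lam 2 x.1)
      = (2 / 3 * dot2 (g 0) (n 0)) • (fun x : Tset v => wFun lam g n area 0 x.1)
      + (2 / 3 * dot2 (g 1) (n 1)) • (fun x : Tset v => wFun lam g n area 1 x.1)
      + (2 / 3 * dot2 (g 2) (n 2)) • (fun x : Tset v => wFun lam g n area 2 x.1) := by
    funext x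
    have := key x.1
    simp only [Pi.add_apply, Pi.smul_apply, smul_eq_mul]
    linarith
  rw [key2]
  refine Submodule.add_mem _ (Submodule.add_mem _ ?_ ?_) ?_ <;>
    exact Submodule.smul_mem _ _ (Submodule.subset_span (by simp))
end
end

section
/- Let s0 = λ1 λ2 (λ1 − λ2). Then: for every x ∈ ℝ² with λ0(x) = 0, ∇s0(x) · n0 = 3(c_{1,0} − c_{2,0}) λ1(x) λ2(x) + c_{2,0} λ1(x) − c_{1,0} λ2(x); for every x ∈ ℝ² with λ1(x) = 0, ∇s0(x) · n1 = −c_{1,1} λ2(x)²; and for every x ∈ ℝ² with λ2(x) = 0, ∇s0(x) · n2 = c_{2,2} λ1(x)². -/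
noncomputable section

open Matrix MeasureTheory

/-! The normal derivative of `s₀` is the product rule, each `∇λᵢ · n` being a constant. On the
edges `λ₁ = 0` and `λ₂ = 0` this collapses at once; on `λ₀ = 0` one uses the partition of unity
`λ₁ + λ₂ = 1`, which holds because `λ₀ + λ₁ + λ₂` is an affine map equal to `1` at the three
vertices, and these affinely span the plane. -/

theorem AffineMap.ext_of_affineIndependent {k V W ι : Type*} [Field k] [AddCommGroup V]
    [Module k V] [FiniteDimensional k V] [AddCommGroup W] [Module k W] [Fintype ι]
    {v : ι → V} (hv : AffineIndependent k v) (hcard : Fintype.card ι = Module.finrank k V + 1)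
    {f f' : V →ᵃ[k] W} (h : ∀ i, f (v i) = f' (v i)) : f = f' :=
  AffineMap.ext_on (hv.affineSpan_eq_top_iff_card_eq_finrank_add_one.mpr hcard)
    (Set.forall_mem_range.mpr h)

def dotCLM (a : Vec2) : Vec2 →L[ℝ] ℝ :=
  a 0 • ContinuousLinearMap.proj 0 + a 1 • ContinuousLinearMap.proj 1

@[simp]
lemma dotCLM_apply (a y : Vec2) : dotCLM a y = dot2 a y := by
  simp [dotCLM, dot2]

lemma hasFDerivAt_dot2_add_const (a : Vec2) (c : ℝ) (x : Vec2) :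
    HasFDerivAt (fun y => dot2 a y + c) (dotCLM a) x := by
  simpa only [dotCLM_apply] using (dotCLM a).hasFDerivAt.add_const c

lemma sum_lam_eq_one {v : Fin 3 → Vec2} (hv : AffineIndependent ℝ v)
    {lam : Fin 3 → Vec2 → ℝ} {g : Fin 3 → Vec2} {cst : Fin 3 → ℝ}
    (hlam : ∀ i x, lam i x = dot2 (g i) x + cst i)
    (hdelta : ∀ i j, lam i (v j) = if i = j then 1 else 0) (x : Vec2) :
    lam 0 x + lam 1 x + lam 2 x = 1 := by
  let sumLam : Vec2 →ᵃ[ℝ] ℝ :=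
    AffineMap.mk' (fun y => lam 0 y + lam 1 y + lam 2 y) (dotCLM (g 0 + g 1 + g 2)) 0
      (fun y => by
        simp only [hlam, dot2, vsub_eq_sub, sub_zero, ContinuousLinearMap.coe_coe, dotCLM_apply,
          Pi.add_apply, Pi.zero_apply, mul_zero, add_zero, vadd_eq_add]
        ring)
  have hsum : sumLam = AffineMap.const ℝ Vec2 (1 : ℝ) := by
    refine AffineMap.ext_of_affineIndependent hv (by simp) fun j => ?_
    fin_cases j <;> simp [sumLam, hdelta]
  simpa [sumLam] using congr($hsum x)

lemma fderiv_sFun_zero_apply {lam : Fin 3 → Vec2 → ℝ} {L₁ L₂ : Vec2 →L[ℝ] ℝ} {x : Vec2}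
    (h₁ : HasFDerivAt (lam 1) L₁ x) (h₂ : HasFDerivAt (lam 2) L₂ x) (m : Vec2) :
    fderiv ℝ (sFun lam 0) x m =
      (L₁ m * lam 2 x + lam 1 x * L₂ m) * (lam 1 x - lam 2 x) +
        lam 1 x * lam 2 x * (L₁ m - L₂ m) := by
  have hs : HasFDerivAt (sFun lam 0) _ x := (h₁.mul h₂).mul (h₁.sub h₂)
  rw [hs.fderiv]
  simp only [_root_.add_apply, _root_.smul_apply, _root_.sub_apply, smul_eq_mul, Pi.mul_apply,
    zero_add]
  ring

theorem s0_normal_derivatives_general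
    (v : Fin 3 → Vec2) (hv : AffineIndependent ℝ v)
    (lam : Fin 3 → Vec2 → ℝ) (g : Fin 3 → Vec2) (cst : Fin 3 → ℝ)
    (hlam : ∀ i x, lam i x = dot2 (g i) x + cst i)
    (hdelta : ∀ i j, lam i (v j) = if i = j then 1 else 0)
    (n : Fin 3 → Vec2) :
    (∀ x, lam 0 x = 0 →
      fderiv ℝ (sFun lam 0) x (n 0)
        = 3 * (dot2 (g 1) (n 0) - dot2 (g 2) (n 0)) * (lam 1 x * lam 2 x) +
            (dot2 (g 2) (n 0) * lam 1 x - dot2 (g 1) (n 0) * lam 2 x)) ∧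
    (∀ x, lam 1 x = 0 →
      fderiv ℝ (sFun lam 0) x (n 1) = -(dot2 (g 1) (n 1)) * (lam 2 x) ^ 2) ∧
    (∀ x, lam 2 x = 0 →
      fderiv ℝ (sFun lam 0) x (n 2) = dot2 (g 2) (n 2) * (lam 1 x) ^ 2) := by
  have hderiv : ∀ i x, HasFDerivAt (lam i) (dotCLM (g i)) x := fun i x => by
    simpa only [← hlam] using hasFDerivAt_dot2_add_const (g i) (cst i) x
  have hnormal : ∀ x m, fderiv ℝ (sFun lam 0) x m =
      (dot2 (g 1) m * lam 2 x + lam 1 x * dot2 (g 2) m) * (lam 1 x - lam 2 x) +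
        lam 1 x * lam 2 x * (dot2 (g 1) m - dot2 (g 2) m) := fun x m => by
    simpa only [dotCLM_apply] using fderiv_sFun_zero_apply (hderiv 1 x) (hderiv 2 x) m
  refine ⟨fun x hx => ?_, fun x hx => ?_, fun x hx => ?_⟩
  · have h12 : lam 1 x + lam 2 x = 1 := by linarith [sum_lam_eq_one hv hlam hdelta x]
    rw [hnormal]
    linear_combination (dot2 (g 2) (n 0) * lam 1 x - dot2 (g 1) (n 0) * lam 2 x) * h12
  · rw [hnormal, hx]; ring
  · rw [hnormal, hx]; ring

/-- normal derivatives of `s₀ = λ₁λ₂(λ₁ − λ₂)` on the three edge lines. -/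
theorem s0_normal_derivatives
    (v : Fin 3 → Vec2) (hv : AffineIndependent ℝ v)
    (lam : Fin 3 → Vec2 → ℝ) (g : Fin 3 → Vec2) (cst : Fin 3 → ℝ)
    (hlam : ∀ i x, lam i x = dot2 (g i) x + cst i)
    (hdelta : ∀ i j, lam i (v j) = if i = j then 1 else 0)
    (n : Fin 3 → Vec2) (hn1 : ∀ j, dot2 (n j) (n j) = 1)
    (hn2 : ∀ j, dot2 (n j) (v (j + 2) - v (j + 1)) = 0) :
    (∀ x, lam 0 x = 0 →
      fderiv ℝ (sFun lam 0) x (n 0)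
        = 3 * (dot2 (g 1) (n 0) - dot2 (g 2) (n 0)) * (lam 1 x * lam 2 x) +
            (dot2 (g 2) (n 0) * lam 1 x - dot2 (g 1) (n 0) * lam 2 x)) ∧
    (∀ x, lam 1 x = 0 →
      fderiv ℝ (sFun lam 0) x (n 1) = -(dot2 (g 1) (n 1)) * (lam 2 x) ^ 2) ∧
    (∀ x, lam 2 x = 0 →
      fderiv ℝ (sFun lam 0) x (n 2) = dot2 (g 2) (n 2) * (lam 1 x) ^ 2) :=
  s0_normal_derivatives_general v hv lam g cst hlam hdelta n
end
end

section
/- Let n ∈ ℝ² be a nonzero vector with n · (v0 − vc) = 0. If α, β ∈ ℝ satisfy α ((v2 − v0)(v2 − v0)ᵀ) n = β ((v1 − v0)(v1 − v0)ᵀ) n, then α = β = 0. (This is the key mechanism, at the vertex v0, by which continuity of the normal stress component across the interior edge from v0 to vc forces the rank-one tangential stresses from the two adjacent subtriangles to vanish.) -/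
noncomputable section

open Matrix MeasureTheory

/-!
With `a = v₁ - v₀` and `b = v₂ - v₀`, the orthogonality `n ⬝ (v₀ - v_c) = 0` says
`n ⬝ a = -(n ⬝ b)`, and this common value is nonzero since `a, b` span `ℝ²`. As
`(x xᵀ) n = (x ⬝ n) x`, the hypothesis becomes `(n ⬝ b) (β a + α b) = 0`, so linear
independence of `a, b` gives `α = β = 0`.
-/

theorem affineIndependent_iff_linearIndependent_vsub_fin_three {k V P : Type*} [Ring k]
    [AddCommGroup V] [Module k V] [AddTorsor V P] (p : Fin 3 → P) :
    AffineIndependent k p ↔ LinearIndependent k ![p 1 -ᵥ p 0, p 2 -ᵥ p 0] := by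
  rw [affineIndependent_iff_linearIndependent_vsub k p 0,
    ← linearIndependent_equiv (finSuccAboveEquiv (0 : Fin 3))]
  convert! Iff.rfl
  ext i
  fin_cases i <;> rfl

theorem LinearIndependent.det_ne_zero_of_fin_two {K : Type*} [Field K] {a b : Fin 2 → K}
    (h : LinearIndependent K ![a, b]) : a 0 * b 1 - a 1 * b 0 ≠ 0 := by
  have := (Matrix.linearIndependent_rows_iff_isUnit (A := Matrix.of ![a, b])).mp h
  rw [Matrix.isUnit_iff_isUnit_det, isUnit_iff_ne_zero, Matrix.det_fin_two] at this
  simpa using this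

theorem dot2_comm (a b : Vec2) : dot2 a b = dot2 b a := by
  simp only [dot2]; ring

theorem outer_mulVec (a b x : Vec2) : outer a b *ᵥ x = dot2 b x • a := by
  ext i
  simp only [outer, mulVec, dotProduct, Fin.sum_univ_two, dot2, Pi.smul_apply, smul_eq_mul]
  ring

theorem dot2_sub_centroid (n p₀ p₁ p₂ : Vec2) :
    dot2 n (p₀ - (1 / 3 : ℝ) • (p₀ + p₁ + p₂)) = -(dot2 n (p₁ - p₀) + dot2 n (p₂ - p₀)) / 3 := by
  simp only [dot2, Pi.sub_apply, Pi.smul_apply, Pi.add_apply, smul_eq_mul]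
  ring

theorem eq_zero_of_dot2_eq_zero_of_linearIndependent {a b n : Vec2}
    (hab : LinearIndependent ℝ ![a, b]) (ha : dot2 n a = 0) (hb : dot2 n b = 0) : n = 0 := by
  have hdet := hab.det_ne_zero_of_fin_two
  simp only [dot2] at ha hb
  have h₀ : (a 0 * b 1 - a 1 * b 0) * n 0 = 0 := by linear_combination b 1 * ha - a 1 * hb
  have h₁ : (a 0 * b 1 - a 1 * b 0) * n 1 = 0 := by linear_combination a 0 * hb - b 0 * ha
  ext i
  fin_cases i
  exacts [(mul_eq_zero.mp h₀).resolve_left hdet, (mul_eq_zero.mp h₁).resolve_left hdet]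

/-- for `n ≠ 0` orthogonal to `v₀ − v_c`, if
`α ((v₂−v₀)(v₂−v₀)ᵀ) n = β ((v₁−v₀)(v₁−v₀)ᵀ) n`, then `α = β = 0`. -/
theorem rank_one_tangential_stresses_vanish
    (v : Fin 3 → Vec2) (hv : AffineIndependent ℝ v)
    (vc : Vec2) (hvc : vc = (1 / 3 : ℝ) • (v 0 + v 1 + v 2))
    (nv : Vec2) (hnv : nv ≠ 0) (horth : dot2 nv (v 0 - vc) = 0)
    (α β : ℝ)
    (h : α • Matrix.mulVec (outer (v 2 - v 0) (v 2 - v 0)) nv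
        = β • Matrix.mulVec (outer (v 1 - v 0) (v 1 - v 0)) nv) :
    α = 0 ∧ β = 0 := by
  have hab : LinearIndependent ℝ ![v 1 - v 0, v 2 - v 0] :=
    (affineIndependent_iff_linearIndependent_vsub_fin_three v).mp hv
  rw [hvc, dot2_sub_centroid] at horth
  rw [outer_mulVec, outer_mulVec, dot2_comm _ nv, dot2_comm _ nv] at h
  set a := v 1 - v 0
  set b := v 2 - v 0
  have hna : dot2 nv a = -dot2 nv b := by linarith
  have hnb : dot2 nv b ≠ 0 := fun hnb =>
    hnv (eq_zero_of_dot2_eq_zero_of_linearIndependent hab (by linarith) hnb)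
  have hcomb : (β * dot2 nv b) • a + (α * dot2 nv b) • b = 0 := by
    rw [hna] at h
    linear_combination (norm := module) h
  obtain ⟨hβ, hα⟩ := LinearIndependent.pair_iff.mp hab _ _ hcomb
  exact ⟨(mul_eq_zero.mp hα).resolve_right hnb, (mul_eq_zero.mp hβ).resolve_right hnb⟩
end
end
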